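/- arXiv:0806.1692 — 10 statements merged into one kernel-verified Lean document; each statement's English description precedes it below -/
import Mathlib

section
/- Let n ≥ 1 and let X_1, …, X_k be a finite collection of nonempty open convex subsets of ℝ^n. If for every choice of indices i_1 < ⋯ < i_{n+1} the intersection X_{i_1} ∩ ⋯ ∩ X_{i_{n+1}} is nonempty, then the intersection ⋂_{i=1}^k X_i is nonempty. -/
/-- **Helly's theorem (1913).**  Let `n ≥ 1` and let `X 0, …, X (k-1)` be a finite
collection of nonempty open convex subsets of `ℝⁿ`.  If every subfamily of size at
most `n + 1` has nonempty intersection, then the whole family has nonempty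
intersection. -/
theorem helly_theorem_convex (n k : ℕ) (hn : 1 ≤ n)
    (X : Fin k → Set (EuclideanSpace ℝ (Fin n)))
    (hne : ∀ i, (X i).Nonempty)
    (hopen : ∀ i, IsOpen (X i))
    (hconv : ∀ i, Convex ℝ (X i))
    (hhelly : ∀ s : Finset (Fin k), s.card ≤ n + 1 → (⋂ i ∈ s, X i).Nonempty) :
    (⋂ i, X i).Nonempty := by
  have hrank : Module.finrank ℝ (EuclideanSpace ℝ (Fin n)) = n := by simp
  have := Convex.helly_theorem' (𝕜 := ℝ) (F := X) (s := Finset.univ)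
    (fun i _ => hconv i) (fun I _ hI => hhelly I (by rwa [hrank] at hI))
  simpa using this
end

section
/- Let V be an r-dimensional real inner product space, let A = {v_1, …, v_r} be a set of r linearly independent vectors in V, and suppose v ∈ V is a nonzero vector with ⟪v, v_i⟫ ≤ 0 for all i. Then there exists a vector γ ∈ V with ⟪γ, v_i⟫ < 0 for every i, such that moreover γ does not lie in the linear span of any proper subset of A. -/
open scoped RealInnerProductSpace

/-- If `A = {v 0, …, v (r-1)}` is a set of `r` linearly independent vectors in an
`r`-dimensional real inner product space `V` and `v₀ ≠ 0` satisfies `⟪v₀, v i⟫ ≤ 0`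
for all `i`, then there exists `γ` with `⟪γ, v i⟫ < 0` for every `i`, and moreover
`γ` can be chosen outside the linear span of every proper subset of `A`. -/
theorem exists_strictly_negative_inner_regular (r : ℕ) (V : Type*) [NormedAddCommGroup V]
    [InnerProductSpace ℝ V] (hdim : Module.finrank ℝ V = r)
    (v : Fin r → V) (hli : LinearIndependent ℝ v)
    (v₀ : V) (hv₀ : v₀ ≠ 0) (hle : ∀ i, ⟪v₀, v i⟫ ≤ 0) :
    ∃ γ : V, (∀ i, ⟪γ, v i⟫ < 0) ∧
      ∀ s : Set (Fin r), s ≠ Set.univ → γ ∉ Submodule.span ℝ (v '' s) := by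
  rcases Nat.eq_zero_or_pos r with hr | hr
  · subst hr
    exact ⟨v₀, fun i => i.elim0, fun s hs => absurd (Subsingleton.elim s Set.univ) hs⟩
  haveI : Nonempty (Fin r) := ⟨⟨0, hr⟩⟩
  haveI : FiniteDimensional ℝ V := FiniteDimensional.of_finrank_pos (by omega)
  -- the linear map γ ↦ (⟪γ, v i⟫)_i
  set T : V →ₗ[ℝ] (Fin r → ℝ) :=
    LinearMap.pi (fun i => (innerSL ℝ (v i)).toLinearMap) with hT
  have hTapply : ∀ γ i, T γ i = ⟪γ, v i⟫ := by
    intro γ i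
    simp [hT, real_inner_comm]
  have hTinj : Function.Injective T := by
    rw [← LinearMap.ker_eq_bot]
    rw [Submodule.eq_bot_iff]
    intro γ hγ
    have h0 : ∀ i, ⟪γ, v i⟫ = 0 := by
      intro i
      have := congrFun (LinearMap.mem_ker.mp hγ) i
      rwa [hTapply] at this
    have hspan : Submodule.span ℝ (Set.range v) = ⊤ := by
      exact LinearIndependent.span_eq_top_of_card_eq_finrank hli (by simp [hdim])
    have hK : Submodule.span ℝ (Set.range v) ≤
        LinearMap.ker (innerSL ℝ γ).toLinearMap := by
      apply Submodule.span_le.mpr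
      rintro _ ⟨i, rfl⟩
      simp [h0 i]
    rw [hspan] at hK
    have : ⟪γ, γ⟫ = 0 := hK (Submodule.mem_top)
    exact inner_self_eq_zero.mp this
  have hTsurj : Function.Surjective T := by
    have hrk : Module.finrank ℝ V = Module.finrank ℝ (Fin r → ℝ) := by
      simp [hdim]
    exact (LinearMap.injective_iff_surjective_of_finrank_eq_finrank hrk).mp hTinj
  obtain ⟨γ₀, hγ₀⟩ := hTsurj (fun _ => (-1 : ℝ))
  -- the open set of strictly negative γ
  set U : Set V := ⋂ i, {γ : V | ⟪γ, v i⟫ < 0} with hU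
  have hUopen : IsOpen U := by
    apply isOpen_iInter_of_finite
    intro i
    have hc : Continuous fun γ : V => ⟪γ, v i⟫ :=
      Continuous.inner continuous_id continuous_const
    exact isOpen_lt hc continuous_const
  have hγ₀U : γ₀ ∈ U := by
    rw [hU]
    simp only [Set.mem_iInter, Set.mem_setOf_eq]
    intro i
    have := congrFun hγ₀ i
    rw [hTapply] at this
    rw [this]; norm_num
  -- the dense set avoiding all proper spans
  have hdense : ∀ s : Set (Fin r), s ≠ Set.univ →
      Dense ((↑(Submodule.span ℝ (v '' s)) : Set V)ᶜ) := by
    intro s hs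
    rw [← interior_eq_empty_iff_dense_compl]
    by_contra hne
    have := Submodule.eq_top_of_nonempty_interior' (Submodule.span ℝ (v '' s))
      (Set.nonempty_iff_ne_empty.mpr hne)
    obtain ⟨j, hj⟩ : ∃ j, j ∉ s := by
      by_contra h
      push_neg at h
      exact hs (Set.eq_univ_of_forall h)
    have : v j ∉ Submodule.span ℝ (v '' s) := hli.notMem_span_image hj
    rw [‹Submodule.span ℝ (v '' s) = ⊤›] at this
    exact this Submodule.mem_top
  set D : Set V := ⋂ s : {s : Set (Fin r) // s ≠ Set.univ},
      ((↑(Submodule.span ℝ (v '' s.1)) : Set V)ᶜ) with hD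
  have hDdense : Dense D := by
    apply dense_iInter_of_isOpen
    · intro s
      exact (Submodule.closed_of_finiteDimensional _).isOpen_compl
    · intro s
      exact hdense s.1 s.2
  obtain ⟨γ, hγU, hγD⟩ := hDdense.inter_open_nonempty U hUopen ⟨γ₀, hγ₀U⟩
  refine ⟨γ, ?_, ?_⟩
  · intro i
    exact Set.mem_iInter.mp hγU i
  · intro s hs
    have := Set.mem_iInter.mp hγD ⟨s, hs⟩
    simpa using this
end

section
/- Let V be a real inner product space and let v_1, …, v_r be linearly independent vectors in V satisfying ⟪v_i, v_j⟫ ≤ 0 for all i ≠ j. Then there exists a vector γ ∈ V with ⟪γ, v_i⟫ < 0 for every i; that is, all of the v_i lie strictly on the same side of the hyperplane orthogonal to γ. -/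
open scoped RealInnerProductSpace

/-- If `v 0, …, v (r-1)` are linearly independent vectors in a real inner product
space with `⟪v i, v j⟫ ≤ 0` for all `i ≠ j`, then there exists a vector `γ` with
`⟪γ, v i⟫ < 0` for every `i`. -/
theorem exists_strictly_negative_inner_of_pairwise_nonpos (r : ℕ) (V : Type*)
    [NormedAddCommGroup V] [InnerProductSpace ℝ V]
    (v : Fin r → V) (hli : LinearIndependent ℝ v)
    (hpair : ∀ i j, i ≠ j → ⟪v i, v j⟫ ≤ 0) :
    ∃ γ : V, ∀ i, ⟪γ, v i⟫ < 0 := by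
  classical
  set W : Submodule ℝ V := Submodule.span ℝ (Set.range v) with hW
  haveI : FiniteDimensional ℝ W := FiniteDimensional.span_of_finite ℝ (Set.finite_range v)
  have hrank : Module.finrank ℝ W = r := by
    rw [hW, finrank_span_eq_card hli, Fintype.card_fin]
  let T : W →ₗ[ℝ] (Fin r → ℝ) :=
    LinearMap.pi fun i => ((innerSL ℝ (v i)).toLinearMap).comp W.subtype
  have hinj : Function.Injective T := by
    rw [← LinearMap.ker_eq_bot]
    ext w
    simp only [LinearMap.mem_ker, Submodule.mem_bot]
    constructor
    · intro hw
      have hw' : ∀ i, ⟪v i, (w : V)⟫ = 0 := fun i => congrFun hw i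
      obtain ⟨c, hc⟩ := (Submodule.mem_span_range_iff_exists_fun ℝ).mp w.2
      have hzero : ⟪(w : V), (w : V)⟫ = 0 := by
        conv_lhs => rw [← hc]
        rw [sum_inner]
        simp [real_inner_smul_left, hc, hw']
      have : (w : V) = 0 := inner_self_eq_zero.mp hzero
      exact Subtype.ext this
    · intro hw; simp [hw, T]
  have hsurj : Function.Surjective T := by
    have : Module.finrank ℝ W = Module.finrank ℝ (Fin r → ℝ) := by
      simp [hrank]
    exact (LinearMap.injective_iff_surjective_of_finrank_eq_finrank this).mp hinj
  obtain ⟨w, hw⟩ := hsurj (fun _ => (-1 : ℝ))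
  refine ⟨(w : V), fun i => ?_⟩
  have : ⟪v i, (w : V)⟫ = -1 := congrFun hw i
  rw [real_inner_comm, this]
  norm_num
end

section
/- Let n ≥ 3 and let R be a commutative ring with unit. For i ≠ j and t ∈ R let E_{ij}(t) = I + t·e_{ij} ∈ SL_n(R) denote the elementary matrix, where e_{ij} is the matrix with a 1 in position (i,j) and zeros elsewhere. Then the subgroup of SL_n(R) generated by the elementary matrices {E_{i,i+1}(t) : 1 ≤ i ≤ n−1, t ∈ R} together with {E_{n,1}(t) : t ∈ R} equals the elementary subgroup E_n(R), i.e. the subgroup of SL_n(R) generated by all elementary matrices E_{ij}(t) with i ≠ j and t ∈ R. -/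
/-- The elementary matrix `E i j t = I + t • e_{ij}` as an element of `SL_n(R)`,
for `i ≠ j`. -/
def elemSL {n : ℕ} {R : Type*} [CommRing R] (i j : Fin n) (hij : i ≠ j) (t : R) :
    Matrix.SpecialLinearGroup (Fin n) R :=
  ⟨Matrix.transvection i j t, Matrix.det_transvection_of_ne i j hij t⟩

lemma elemSL_congr {n : ℕ} {R : Type*} [CommRing R] {i j i' j' : Fin n}
    (hi : i = i') (hj : j = j') (h : i ≠ j) (h' : i' ≠ j') (t : R) :
    elemSL i j h t = elemSL i' j' h' t := by subst hi; subst hj; rfl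

lemma elemSL_comm {n : ℕ} {R : Type*} [CommRing R] (i j k : Fin n)
    (hij : i ≠ j) (hik : i ≠ k) (hkj : k ≠ j) (t : R) :
    elemSL i k hik t * elemSL k j hkj 1 * elemSL i k hik (-t) * elemSL k j hkj (-1)
      = elemSL i j hij t := by
  apply Subtype.ext
  change (1 + Matrix.single i k t) * (1 + Matrix.single k j 1) * (1 + Matrix.single i k (-t))
    * (1 + Matrix.single k j (-1)) = 1 + Matrix.single i j t
  simp only [Matrix.add_mul, Matrix.mul_add, Matrix.one_mul, Matrix.mul_one,
    Matrix.single_mul_single_same,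
    Matrix.single_mul_single_of_ne _ _ _ _ hkj.symm,
    Matrix.single_mul_single_of_ne _ _ _ _ hik.symm,
    Matrix.single_mul_single_of_ne _ _ _ _ hij.symm]
  have hneg : ∀ (a b : Fin n) (c : R), Matrix.single a b (-c) = -Matrix.single a b c := by
    intro a b c
    ext x y
    by_cases h1 : a = x <;> by_cases h2 : b = y <;> simp [Matrix.single, h1, h2]
  simp only [hneg, mul_one, mul_neg, neg_mul, neg_neg, zero_mul, add_zero, zero_add]
  abel

/-- For `n ≥ 3` and a commutative ring `R`, the subgroup of `SL_n(R)` generated by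
the elementary matrices `E_{i,i+1}(t)` (`0 ≤ i ≤ n-2`, the simple-root subgroups)
together with the matrices `E_{n-1,0}(t)` (the root subgroup of the negative of the
highest root) is the full elementary subgroup `E_n(R)`, i.e. the subgroup generated
by all elementary matrices `E_{ij}(t)`, `i ≠ j`. -/
theorem closure_simple_and_lowest_eq_elementary (n : ℕ) (hn : 3 ≤ n)
    (R : Type*) [CommRing R] :
    Subgroup.closure
      ({ g : Matrix.SpecialLinearGroup (Fin n) R |
          ∃ (i : ℕ) (hi : i + 1 < n) (t : R),
            g = elemSL ⟨i, Nat.lt_of_succ_lt hi⟩ ⟨i + 1, hi⟩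
                  (Fin.ne_of_val_ne (by simp)) t } ∪
        { g : Matrix.SpecialLinearGroup (Fin n) R |
          ∃ t : R,
            g = elemSL ⟨n - 1, by omega⟩ ⟨0, by omega⟩
                  (Fin.ne_of_val_ne (by simp; omega)) t }) =
    Subgroup.closure
      { g : Matrix.SpecialLinearGroup (Fin n) R |
        ∃ (i j : Fin n) (hij : i ≠ j) (t : R), g = elemSL i j hij t } := by
  haveI : NeZero n := ⟨by omega⟩
  letI : CommRing (Fin n) := Fin.instCommRing n
  apply le_antisymm
  · apply Subgroup.closure_le _ |>.mpr
    rintro g (⟨i, hi, t, rfl⟩ | ⟨t, rfl⟩)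
    · exact Subgroup.subset_closure ⟨_, _, _, t, rfl⟩
    · exact Subgroup.subset_closure ⟨_, _, _, t, rfl⟩
  · apply Subgroup.closure_le _ |>.mpr
    rintro g ⟨i, j, hij, t, rfl⟩
    set H := Subgroup.closure
      ({ g : Matrix.SpecialLinearGroup (Fin n) R |
          ∃ (i : ℕ) (hi : i + 1 < n) (t : R),
            g = elemSL ⟨i, Nat.lt_of_succ_lt hi⟩ ⟨i + 1, hi⟩
                  (Fin.ne_of_val_ne (by simp)) t } ∪
        { g : Matrix.SpecialLinearGroup (Fin n) R |
          ∃ t : R,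
            g = elemSL ⟨n - 1, by omega⟩ ⟨0, by omega⟩
                  (Fin.ne_of_val_ne (by simp; omega)) t }) with hH
    show elemSL i j hij t ∈ H
    -- step generators: consecutive (mod n) transvections are in H
    have gen1 : ∀ (a : Fin n) (h : a ≠ a + 1) (s : R), elemSL a (a + 1) h s ∈ H := by
      intro a h s
      by_cases hv : a.val + 1 < n
      · refine Subgroup.subset_closure (Or.inl ⟨a.val, hv, s, ?_⟩)
        refine elemSL_congr ?_ ?_ _ _ s
        · exact (Fin.eta a _).symm
        · apply Fin.ext
          have hv1 : (a + 1).val = (a.val + 1) % n := by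
            simp [Fin.add_def]
          rw [hv1, Nat.mod_eq_of_lt hv]
      · have hlast : a.val = n - 1 := by have := a.isLt; omega
        refine Subgroup.subset_closure (Or.inr ⟨s, ?_⟩)
        refine elemSL_congr ?_ ?_ _ _ s
        · apply Fin.ext; simp [hlast]
        · apply Fin.ext
          have hv1 : (a + 1).val = (a.val + 1) % n := by
            simp [Fin.add_def]
          rw [hv1, hlast, Nat.sub_add_cancel (by omega : 1 ≤ n), Nat.mod_self]
    have key : ∀ d : ℕ, 1 ≤ d → d < n → ∀ (a b : Fin n) (hb : b = a + (d : Fin n))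
        (h : a ≠ b) (s : R), elemSL a b h s ∈ H := by
      intro d
      induction d with
      | zero => omega
      | succ d ih =>
        intro _ hdn a b hb h s
        by_cases hd0 : d = 0
        · subst hd0
          subst hb
          have h1 : ((1 : ℕ) : Fin n) = 1 := by norm_num
          have h' : a ≠ a + 1 := by rwa [← h1]
          rw [elemSL_congr rfl (by rw [h1]) h h' s]
          exact gen1 a h' s
        · have hd1 : 1 ≤ d := by omega
          have hcast : ((d + 1 : ℕ) : Fin n) = (d : Fin n) + 1 := by push_cast; ring
          set c := a + (d : Fin n) with hc
          have hcb : b = c + 1 := by rw [hb, hcast, hc, add_assoc]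
          have hac : a ≠ c := by
            intro hEq
            have : ((d : ℕ) : Fin n) = 0 := by
              rw [hc] at hEq
              exact (left_eq_add.mp hEq)
            rw [Fin.natCast_eq_zero] at this
            have := Nat.le_of_dvd (by omega) this
            omega
          have hcb1 : c ≠ c + 1 := by
            intro hEq
            have : (1 : Fin n) = 0 := (left_eq_add.mp hEq)
            have h1 : ((1 : ℕ) : Fin n) = 1 := by norm_num
            rw [← h1, Fin.natCast_eq_zero] at this
            have := Nat.le_of_dvd (by omega) this
            omega
          subst hcb
          rw [← elemSL_comm a (c + 1) c h hac hcb1 s]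
          exact mul_mem (mul_mem (mul_mem (ih hd1 (by omega) a c rfl hac s)
            (gen1 c hcb1 1)) (ih hd1 (by omega) a c rfl hac (-s)))
            (gen1 c hcb1 (-1))
    have hdpos : (j - i) ≠ 0 := sub_ne_zero.mpr hij.symm
    have hval : (j - i).val ≠ 0 := by
      intro hval
      exact hdpos (Fin.ext (by simp [hval]))
    refine key (j - i).val (by omega) (j - i).isLt i j ?_ hij t
    rw [Fin.cast_val_eq_self]
    ring
end

section
/- Let p be a prime and let n ≥ 3. The ring homomorphism ℤ[X] → ℤ[1/p] sending X to 1/p induces a surjective group homomorphism SL_n(ℤ[X]) → SL_n(ℤ[1/p]). -/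
open Matrix

namespace SLAux

theorem natAbs_emod_lt' (a b : ℤ) (h : b ≠ 0) : (a % b).natAbs < b.natAbs := by
  have h1 : 0 ≤ a % b := Int.emod_nonneg a h
  have h2 : a % b < |b| := Int.emod_lt_abs a h
  rw [Int.abs_eq_natAbs] at h2
  omega

variable {n : ℕ} {R : Type*} [CommRing R]

/-- The transvection as an element of `SL n R`. -/
def tsl (i j : Fin n) (hij : i ≠ j) (c : R) : Matrix.SpecialLinearGroup (Fin n) R :=
  ⟨Matrix.transvection i j c, Matrix.det_transvection_of_ne i j hij c⟩

@[simp] theorem tsl_coe (i j : Fin n) (hij : i ≠ j) (c : R) :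
    (tsl i j hij c).val = Matrix.transvection i j c := rfl

/-- `M` is the identity outside of the `s × s` block. -/
def IsBlockId (s : Finset (Fin n)) (M : Matrix (Fin n) (Fin n) R) : Prop :=
  ∀ i j, i ∉ s ∨ j ∉ s → M i j = if i = j then 1 else 0

theorem IsBlockId.transvection_mul {s : Finset (Fin n)} {M : Matrix (Fin n) (Fin n) R}
    (hM : IsBlockId s M) {i j : Fin n} (hi : i ∈ s) (hj : j ∈ s) (c : R) :
    IsBlockId s (Matrix.transvection i j c * M) := by
  intro a b hab
  by_cases ha : a = i
  · subst ha
    have hb : b ∉ s := by tauto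
    rw [Matrix.transvection_mul_apply_same]
    rw [hM a b (Or.inr hb), hM j b (Or.inr hb)]
    have h1 : a ≠ b := fun h => hb (h ▸ hi)
    have h2 : j ≠ b := fun h => hb (h ▸ hj)
    simp [h1, h2]
  · rw [Matrix.transvection_mul_apply_of_ne _ _ _ _ ha, hM a b hab]

theorem IsBlockId.mul_transvection {s : Finset (Fin n)} {M : Matrix (Fin n) (Fin n) R}
    (hM : IsBlockId s M) {i j : Fin n} (hi : i ∈ s) (hj : j ∈ s) (c : R) :
    IsBlockId s (M * Matrix.transvection i j c) := by
  intro a b hab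
  by_cases hb : b = j
  · subst hb
    have ha : a ∉ s := by tauto
    rw [Matrix.mul_transvection_apply_same]
    rw [hM a b (Or.inl ha), hM a i (Or.inl ha)]
    have h1 : a ≠ b := fun h => ha (h ▸ hj)
    have h2 : a ≠ i := fun h => ha (h ▸ hi)
    simp [h1, h2]
  · rw [Matrix.mul_transvection_apply_of_ne _ _ _ _ hb, hM a b hab]

variable {n : ℕ} {R : Type*} [CommRing R]
variable (H : Subgroup (Matrix.SpecialLinearGroup (Fin n) R))
/-- Euclidean reduction of the column `b` inside the block `s`. -/
theorem euclid (hH : ∀ (i j : Fin n) (hij : i ≠ j) (c : R), tsl i j hij c ∈ H)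
    (s : Finset (Fin n)) (b : Fin n) (hb : b ∈ s) (t : R) (μ : ℕ) :
    ∀ (m : Fin n → ℤ) (A : Matrix.SpecialLinearGroup (Fin n) R),
      (∑ i, (m i).natAbs) = μ → IsBlockId s A.val →
      (∀ i ∈ s, A.val i b = (m i : R) * t) →
      ∃ E, E ∈ H ∧ IsBlockId s (E * A).val ∧
        ∃ i0 ∈ s, ∀ i, i ≠ i0 → (E * A).val i b = 0 := by
  induction μ using Nat.strong_induction_on with
  | _ μ IH =>
  intro m A hμ hA hcol
  by_cases hstop : ∃ i ∈ s, ∃ j ∈ s, i ≠ j ∧ m i ≠ 0 ∧ m j ≠ 0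
  · -- Euclid step: reduce at the position with larger |m| using the other.
    have main : ∀ i ∈ s, ∀ j ∈ s, i ≠ j → m i ≠ 0 → m j ≠ 0 →
        (m i).natAbs ≤ (m j).natAbs →
        ∃ E, E ∈ H ∧ IsBlockId s (E * A).val ∧
          ∃ i0 ∈ s, ∀ i, i ≠ i0 → (E * A).val i b = 0 := by
      intro i hi j hj hij hmi hmj hle
      set q : ℤ := -(m j / m i) with hq
      set T := tsl j i (Ne.symm hij) ((q : R)) with hT
      set m' := Function.update m j (m j % m i) with hm'
      have hsum : (∑ x, (m' x).natAbs) < μ := by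
        have e1 : ∀ x, (m' x).natAbs =
            Function.update (fun y => (m y).natAbs) j ((m j % m i).natAbs) x := by
          intro x
          by_cases hx : x = j
          · subst hx; simp [hm']
          · simp [hm', hx]
        rw [Finset.sum_congr rfl fun x _ => e1 x,
          Finset.sum_update_of_mem (Finset.mem_univ j)]
        have h2 : μ = (∑ x ∈ Finset.univ \ {j}, (m x).natAbs) + (m j).natAbs := by
          rw [← hμ, ← Finset.sum_eq_sum_sdiff_singleton_add (Finset.mem_univ j)]
        have h3 : (m j % m i).natAbs < (m i).natAbs := natAbs_emod_lt' _ _ hmi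
        omega
      have hA' : IsBlockId s ((T * A).val) := by
        rw [Matrix.SpecialLinearGroup.coe_mul, hT, tsl_coe]
        exact hA.transvection_mul hj hi _
      have hcol' : ∀ r ∈ s, (T * A).val r b = (m' r : R) * t := by
        intro r hr
        rw [Matrix.SpecialLinearGroup.coe_mul, hT, tsl_coe]
        by_cases hrj : r = j
        · subst hrj
          rw [Matrix.transvection_mul_apply_same, hcol r hr, hcol i hi]
          have : m r % m i = m r + q * m i := by
            rw [hq, Int.emod_def]; ring
          rw [hm']
          simp only [Function.update_self, this]
          push_cast
          ring
        · rw [Matrix.transvection_mul_apply_of_ne _ _ _ _ hrj, hcol r hr, hm',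
            Function.update_of_ne hrj]
      obtain ⟨E', hE', hbid, i0, hi0, hcol0⟩ := IH _ hsum m' (T * A) rfl hA' hcol'
      refine ⟨E' * T, mul_mem hE' (hH _ _ _ _), ?_, i0, hi0, ?_⟩
      · rw [mul_assoc]; exact hbid
      · intro r hr
        rw [mul_assoc]; exact hcol0 r hr
    obtain ⟨i, hi, j, hj, hij, hmi, hmj⟩ := hstop
    rcases le_total (m i).natAbs (m j).natAbs with hle | hle
    · exact main i hi j hj hij hmi hmj hle
    · exact main j hj i hi (Ne.symm hij) hmj hmi hle
  · -- stop: at most one nonzero coefficient within `s`.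
    push_neg at hstop
    have key : ∀ i0 ∈ s, (∀ i ∈ s, i ≠ i0 → m i = 0) →
        ∃ E, E ∈ H ∧ IsBlockId s (E * A).val ∧
          ∃ i0 ∈ s, ∀ i, i ≠ i0 → (E * A).val i b = 0 := by
      intro i0 hi0 hzero
      refine ⟨1, one_mem H, by simpa using hA, i0, hi0, ?_⟩
      intro i hi
      rw [one_mul]
      by_cases his : i ∈ s
      · rw [hcol i his, hzero i his hi]; simp
      · have hib : i ≠ b := fun h => his (h ▸ hb)
        rw [hA i b (Or.inl his)]
        simp [hib]
    by_cases hex : ∃ i ∈ s, m i ≠ 0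
    · obtain ⟨i0, hi0, hm0⟩ := hex
      exact key i0 hi0 fun i his hne => hstop i0 hi0 i his (fun h => hne h.symm) hm0
    · push_neg at hex
      exact key b hb fun i his _ => hex i his
/-- Turn a column `g·e_a` (with `g` a unit) into `e_b`, using transvections. -/
theorem pivot (hH : ∀ (i j : Fin n) (hij : i ≠ j) (c : R), tsl i j hij c ∈ H)
    {s : Finset (Fin n)} {a b : Fin n} (ha : a ∈ s) (hb : b ∈ s) (hab : a ≠ b)
    (B : Matrix.SpecialLinearGroup (Fin n) R) (hB : IsBlockId s B.val)
    (h0 : ∀ i, i ≠ a → i ≠ b → B.val i b = 0) (hu : IsUnit (B.val a b)) :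
    ∃ E, E ∈ H ∧ IsBlockId s (E * B).val ∧
      ∀ i, (E * B).val i b = if i = b then 1 else 0 := by
  set g := B.val a b with hg
  set u : R := ↑hu.unit⁻¹ with hu'
  have hug : u * g = 1 := hu.val_inv_mul
  set c1 : R := u * (1 - B.val b b) with hc1
  refine ⟨tsl a b hab (-g) * tsl b a (Ne.symm hab) c1,
    mul_mem (hH _ _ _ _) (hH _ _ _ _), ?_, ?_⟩
  · simp only [Matrix.SpecialLinearGroup.coe_mul, tsl_coe, Matrix.mul_assoc]
    exact (hB.transvection_mul hb ha c1).transvection_mul ha hb (-g)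
  · intro i
    have hColb : ∀ i, (Matrix.transvection b a c1 * B.val) i b
        = if i = b then 1 else B.val i b := by
      intro i
      by_cases hib : i = b
      · subst hib
        rw [Matrix.transvection_mul_apply_same, if_pos rfl, hc1]
        have : u * (1 - B.val i i) * B.val a i = (u * B.val a i) * (1 - B.val i i) := by ring
        rw [this, ← hg, hug, one_mul]
        ring
      · rw [Matrix.transvection_mul_apply_of_ne _ _ _ _ hib, if_neg hib]
    rw [mul_assoc]
    simp only [Matrix.SpecialLinearGroup.coe_mul, tsl_coe]
    rw [← Matrix.mul_assoc]
    by_cases hia : i = a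
    · subst hia
      rw [Matrix.mul_assoc, Matrix.transvection_mul_apply_same, hColb, hColb,
        if_neg hab, if_pos rfl, if_neg hab, ← hg]
      ring
    · rw [Matrix.mul_assoc, Matrix.transvection_mul_apply_of_ne _ _ _ _ hia, hColb]
      by_cases hib : i = b
      · rw [if_pos hib, if_pos hib]
      · rw [if_neg hib, if_neg hib, h0 i hia hib]

/-- Clear the entries of row `b` in the columns of `u`, once column `b` is `e_b`. -/
theorem rowclear (hH : ∀ (i j : Fin n) (hij : i ≠ j) (c : R), tsl i j hij c ∈ H)
    {s : Finset (Fin n)} {b : Fin n} (hb : b ∈ s) (u : Finset (Fin n)) :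
    u ⊆ s.erase b → ∀ (C : Matrix.SpecialLinearGroup (Fin n) R), IsBlockId s C.val →
      (∀ i, C.val i b = if i = b then 1 else 0) →
      ∃ F, F ∈ H ∧ IsBlockId s (C * F).val ∧
        (∀ i, (C * F).val i b = if i = b then 1 else 0) ∧
        ∀ j ∈ u, (C * F).val b j = 0 := by
  induction u using Finset.induction_on with
  | empty =>
    intro _ C hC hcol
    exact ⟨1, one_mem H, by simpa using hC, by simpa using hcol, by simp⟩
  | @insert a u ha IHu =>
    intro hsub C hC hcol
    have hau : a ∈ s.erase b := hsub (Finset.mem_insert_self a u)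
    have hab : a ≠ b := (Finset.mem_erase.mp hau).1
    have has : a ∈ s := (Finset.mem_erase.mp hau).2
    obtain ⟨F, hF, hC', hcol', hrow'⟩ :=
      IHu (fun x hx => hsub (Finset.mem_insert_of_mem hx)) C hC hcol
    set c : R := -((C * F).val b a) with hc
    refine ⟨F * tsl b a (Ne.symm hab) c, mul_mem hF (hH _ _ _ _), ?_, ?_, ?_⟩
    · rw [← mul_assoc]
      simp only [Matrix.SpecialLinearGroup.coe_mul, tsl_coe] at hC' ⊢
      exact hC'.mul_transvection hb has c
    · intro i
      rw [← mul_assoc]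
      simp only [Matrix.SpecialLinearGroup.coe_mul, tsl_coe] at hcol' ⊢
      rw [Matrix.mul_transvection_apply_of_ne _ _ _ _ (Ne.symm hab)]
      exact hcol' i
    · intro j hj
      rw [← mul_assoc]
      simp only [Matrix.SpecialLinearGroup.coe_mul, tsl_coe] at hcol' hrow' ⊢
      rcases Finset.mem_insert.mp hj with rfl | hju
      · rw [Matrix.mul_transvection_apply_same]
        have h1 := hcol' b
        rw [if_pos rfl] at h1
        rw [h1, hc]
        simp
      · have hja : j ≠ a := fun h => ha (h ▸ hju)
        rw [Matrix.mul_transvection_apply_of_ne _ _ _ _ hja]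
        exact hrow' j hju
/-- Main reduction: any special linear matrix which is the identity outside the `s × s`
block lies in any subgroup containing all transvections, provided every vector has a
common "denominator" in the sense of `hdenom`. -/
theorem mem_of_isBlockId (hH : ∀ (i j : Fin n) (hij : i ≠ j) (c : R), tsl i j hij c ∈ H)
    (hdenom : ∀ v : Fin n → R, ∃ (t : R) (m : Fin n → ℤ), ∀ i, v i = (m i : R) * t)
    (s : Finset (Fin n)) :
    ∀ (A : Matrix.SpecialLinearGroup (Fin n) R), IsBlockId s A.val → A ∈ H := by
  induction s using Finset.strongInduction with
  | _ s IHs =>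
  intro A hA
  by_cases hc : s.card ≤ 1
  · -- `A` is the identity.
    have hs1 := Finset.card_le_one.mp hc
    have hd : A.val = Matrix.diagonal (fun k => A.val k k) := by
      ext i j
      by_cases hij : i = j
      · subst hij; simp
      · have hns : i ∉ s ∨ j ∉ s := by
          by_contra hcon
          push_neg at hcon
          exact hij (hs1 i hcon.1 j hcon.2)
        rw [hA i j hns, Matrix.diagonal_apply_ne _ hij, if_neg hij]
    have hone : ∀ k, k ∉ s → A.val k k = 1 := fun k hk => by
      simpa using hA k k (Or.inl hk)
    have hdet : (∏ k, A.val k k) = 1 := by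
      rw [← Matrix.det_diagonal, ← hd]; exact A.2
    have hall : ∀ k, A.val k k = 1 := by
      intro k
      by_cases hk : k ∈ s
      · rw [Finset.prod_eq_single k (fun x _ hx => hone x fun hxs => hx (hs1 x hxs k hk))
          (fun h => absurd (Finset.mem_univ k) h)] at hdet
        exact hdet
      · exact hone k hk
    have hfun : (fun k => A.val k k) = fun _ => (1 : R) := funext hall
    have hA1 : A = 1 := Subtype.ext
      (by rw [hd, hfun, Matrix.diagonal_one, Matrix.SpecialLinearGroup.coe_one])
    rw [hA1]; exact one_mem H
  · push_neg at hc
    obtain ⟨b, hb⟩ : s.Nonempty := Finset.card_pos.mp (by omega)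
    obtain ⟨t, m, hm⟩ := hdenom (fun i => A.val i b)
    obtain ⟨E, hE, hEb, i0, hi0, hz⟩ := euclid H hH s b hb t _ m A rfl hA (fun i _ => hm i)
    -- the remaining entry in the column is a unit
    have hu0 : IsUnit ((E * A).val i0 b) := by
      have hentry : ((E * A).val.adjugate * (E * A).val) b b = 1 := by
        rw [Matrix.adjugate_mul, (E * A).2]; simp
      rw [Matrix.mul_apply, Finset.sum_eq_single i0
        (fun k _ hk => by rw [hz k hk, mul_zero])
        (fun h => absurd (Finset.mem_univ i0) h)] at hentry
      exact IsUnit.of_mul_eq_one _ (by rw [mul_comm]; exact hentry)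
    -- prepare the pivot position `a ≠ b`
    have step : ∃ (E₁ : Matrix.SpecialLinearGroup (Fin n) R) (a : Fin n), E₁ ∈ H ∧ a ∈ s ∧ a ≠ b ∧
        IsBlockId s (E₁ * (E * A)).val ∧
        (∀ i, i ≠ a → i ≠ b → (E₁ * (E * A)).val i b = 0) ∧
        IsUnit ((E₁ * (E * A)).val a b) := by
      rcases eq_or_ne i0 b with h0b | h0b
      · -- the nonzero entry sits at `b`; move a copy to some `a ≠ b`.
        obtain ⟨a, ha'⟩ : (s.erase b).Nonempty := by
          rw [← Finset.card_pos, Finset.card_erase_of_mem hb]; omega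
        have hab : a ≠ b := (Finset.mem_erase.mp ha').1
        have has : a ∈ s := (Finset.mem_erase.mp ha').2
        refine ⟨tsl a b hab 1, a, hH _ _ _ _, has, hab, ?_, ?_, ?_⟩
        · rw [Matrix.SpecialLinearGroup.coe_mul, tsl_coe]
          exact hEb.transvection_mul has hb 1
        · intro i hia hib
          rw [Matrix.SpecialLinearGroup.coe_mul, tsl_coe,
            Matrix.transvection_mul_apply_of_ne _ _ _ _ hia]
          exact hz i (h0b ▸ hib)
        · rw [Matrix.SpecialLinearGroup.coe_mul, tsl_coe,
            Matrix.transvection_mul_apply_same]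
          rw [hz a (h0b ▸ hab), zero_add, one_mul]
          exact h0b ▸ hu0
      · refine ⟨1, i0, one_mem H, hi0, h0b, ?_, ?_, ?_⟩
        · rw [one_mul]; exact hEb
        · intro i hia _
          rw [one_mul]; exact hz i hia
        · rw [one_mul]; exact hu0
    obtain ⟨E₁, a, hE₁, has, hab, hB₂, h0₂, hu₂⟩ := step
    obtain ⟨E₂, hE₂, hC, hcolC⟩ := pivot H hH has hb hab _ hB₂ h0₂ hu₂
    obtain ⟨F, hF, hD, hcolD, hrowD⟩ :=
      rowclear H hH hb (s.erase b) (Finset.Subset.refl _) _ hC hcolC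
    set D := E₂ * (E₁ * (E * A)) * F with hDdef
    have hDblock : IsBlockId (s.erase b) D.val := by
      intro i j hij
      by_cases hijs : i ∉ s ∨ j ∉ s
      · exact hD i j hijs
      · push_neg at hijs
        rcases hij with hi | hj
        · -- i = b
          have hib : i = b := by
            by_contra hneq
            exact hi (Finset.mem_erase.mpr ⟨hneq, hijs.1⟩)
          subst hib
          by_cases hjb : j = i
          · subst hjb
            have := hcolD j
            rw [if_pos rfl] at this
            rw [this, if_pos rfl]
          · have : j ∈ s.erase i := Finset.mem_erase.mpr ⟨hjb, hijs.2⟩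
            rw [hrowD j this, if_neg (Ne.symm hjb)]
        · have hjb : j = b := by
            by_contra hneq
            exact hj (Finset.mem_erase.mpr ⟨hneq, hijs.2⟩)
          subst hjb
          exact hcolD i
    have hDH : D ∈ H := IHs (s.erase b) (Finset.erase_ssubset hb) D hDblock
    have hAeq : A = E⁻¹ * (E₁⁻¹ * (E₂⁻¹ * (D * F⁻¹))) := by
      rw [hDdef]; group
    rw [hAeq]
    exact mul_mem (inv_mem hE) (mul_mem (inv_mem hE₁) (mul_mem (inv_mem hE₂)
      (mul_mem hDH (inv_mem hF))))
theorem map_transvection {S T : Type*} [CommRing S] [CommRing T] (f : S →+* T)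
    {k : ℕ} (i j : Fin k) (c : S) :
    (Matrix.transvection i j c).map f = Matrix.transvection i j (f c) := by
  ext a b
  simp only [Matrix.transvection, Matrix.map_apply, Matrix.add_apply, Matrix.one_apply,
    Matrix.single]
  by_cases hab : a = b <;> by_cases hia : i = a <;> by_cases hjb : j = b <;>
    simp [hab, hia, hjb, Matrix.of_apply, map_add, _root_.map_one, map_zero, apply_ite f]

section Away

variable (p : ℕ)

local notation "Rp" => Localization.Away ((p : ℤ))

noncomputable def invp : Localization.Away ((p : ℤ)) :=
  IsLocalization.Away.invSelf (S := Localization.Away ((p : ℤ))) ((p : ℤ))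

theorem pow_mul_invp (N : ℕ) :
    algebraMap ℤ Rp ((p : ℤ) ^ N) * invp p ^ N = 1 := by
  simp only [invp]
  rw [map_pow, ← mul_pow, IsLocalization.Away.mul_invSelf, one_pow]

theorem exists_pow_mul (x : Rp) :
    ∃ (N : ℕ) (a : ℤ), x * algebraMap ℤ Rp ((p : ℤ) ^ N) = algebraMap ℤ Rp a := by
  obtain ⟨⟨a, s⟩, hs⟩ := IsLocalization.surj (Submonoid.powers ((p : ℤ))) x
  obtain ⟨N, hN⟩ := s.2
  have hN' : ((p : ℤ)) ^ N = (s : ℤ) := hN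
  exact ⟨N, a, by rw [hN']; exact hs⟩

theorem elem_repr (x : Rp) :
    ∃ (N : ℕ) (a : ℤ), x = algebraMap ℤ Rp a * invp p ^ N := by
  obtain ⟨N, a, ha⟩ := exists_pow_mul p x
  refine ⟨N, a, ?_⟩
  have h2 : x * (algebraMap ℤ Rp ((p : ℤ) ^ N) * invp p ^ N)
      = algebraMap ℤ Rp a * invp p ^ N := by rw [← mul_assoc, ha]
  rwa [pow_mul_invp, mul_one] at h2

theorem denom (k : ℕ) (v : Fin k → Rp) :
    ∃ (t : Rp) (m : Fin k → ℤ), ∀ i, v i = ((m i : ℤ) : Rp) * t := by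
  choose N a ha using fun i => exists_pow_mul p (v i)
  set N0 := Finset.univ.sup N with hN0
  refine ⟨invp p ^ N0, fun i => a i * (p : ℤ) ^ (N0 - N i), fun i => ?_⟩
  have hNi : N i ≤ N0 := Finset.le_sup (Finset.mem_univ i)
  have key : v i * algebraMap ℤ Rp ((p : ℤ) ^ N0)
      = algebraMap ℤ Rp (a i * (p : ℤ) ^ (N0 - N i)) := by
    have hsplit : ((p : ℤ)) ^ N0 = (p : ℤ) ^ (N i) * (p : ℤ) ^ (N0 - N i) := by
      rw [← pow_add]; congr 1; omega
    rw [hsplit, _root_.map_mul, ← mul_assoc, ha i, ← _root_.map_mul]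
  have h2 : v i * (algebraMap ℤ Rp ((p : ℤ) ^ N0) * invp p ^ N0)
      = algebraMap ℤ Rp (a i * (p : ℤ) ^ (N0 - N i)) * invp p ^ N0 := by
    rw [← mul_assoc, key]
  rw [pow_mul_invp, mul_one] at h2
  rw [h2, eq_intCast (algebraMap ℤ Rp)]

theorem aeval_surj (x : Rp) :
    ∃ P : Polynomial ℤ, Polynomial.aeval (invp p) P = x := by
  obtain ⟨N, a, hx⟩ := elem_repr p x
  refine ⟨Polynomial.C a * Polynomial.X ^ N, ?_⟩
  rw [_root_.map_mul, Polynomial.aeval_C, map_pow, Polynomial.aeval_X, hx]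

end Away
end SLAux

/-- Let `p` be a prime and `n ≥ 3`.  The ring homomorphism `ℤ[X] → ℤ[1/p]` sending
`X` to `1/p` induces a surjective group homomorphism
`SL_n(ℤ[X]) → SL_n(ℤ[1/p])`. -/
theorem surjective_SL_polynomial_to_SL_localization (p : ℕ) (hp : p.Prime)
    (n : ℕ) (hn : 3 ≤ n) :
    Function.Surjective
      (Matrix.SpecialLinearGroup.map (n := Fin n)
        ((Polynomial.aeval
          (IsLocalization.Away.invSelf (S := Localization.Away (p : ℤ)) (p : ℤ)) :
            Polynomial ℤ →ₐ[ℤ] Localization.Away (p : ℤ)).toRingHom)) := by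
  intro A
  set f : Polynomial ℤ →+* Localization.Away (p : ℤ) :=
    ((Polynomial.aeval
        (IsLocalization.Away.invSelf (S := Localization.Away (p : ℤ)) (p : ℤ)) :
          Polynomial ℤ →ₐ[ℤ] Localization.Away (p : ℤ)).toRingHom) with hf
  have hH : ∀ (i j : Fin n) (hij : i ≠ j) (c : Localization.Away (p : ℤ)),
      SLAux.tsl i j hij c ∈ (Matrix.SpecialLinearGroup.map (n := Fin n) f).range := by
    intro i j hij c
    obtain ⟨P, hP⟩ := SLAux.aeval_surj p c
    refine ⟨SLAux.tsl i j hij P, ?_⟩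
    apply Subtype.ext
    show (SLAux.tsl i j hij P).val.map f = (SLAux.tsl i j hij c).val
    rw [SLAux.tsl_coe, SLAux.tsl_coe, SLAux.map_transvection f i j P,
      show f P = c from hP]
  have hone : SLAux.IsBlockId Finset.univ A.val := by
    intro i j hij
    rcases hij with h | h <;> exact absurd (Finset.mem_univ _) h
  have := SLAux.mem_of_isBlockId _ hH (SLAux.denom p n) Finset.univ A hone
  exact this
end

section
/- Let G be a finite group acting by bijective isometries on a nonempty real Hilbert space H (a complete real inner product space). Then the action has a global fixed point: there exists x ∈ H with g·x = x for all g ∈ G. -/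
/-- **Bruhat–Tits fixed point theorem for Hilbert spaces.**  A finite group acting
by isometries on a real Hilbert space has a global fixed point. -/
theorem finite_group_action_on_hilbert_space_has_fixed_point
    (G : Type*) [Group G] [Finite G]
    (H : Type*) [NormedAddCommGroup H] [InnerProductSpace ℝ H] [CompleteSpace H]
    [MulAction G H] (hiso : ∀ g : G, Isometry (fun x : H => g • x)) :
    ∃ x : H, ∀ g : G, g • x = x := by
  classical
  have : Fintype G := Fintype.ofFinite G
  set n : ℕ := Fintype.card G with hn
  have hn0 : (n : ℝ) ≠ 0 := Nat.cast_ne_zero.mpr Fintype.card_ne_zero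
  set x : H := ((n : ℝ)⁻¹) • ∑ g : G, g • (0 : H) with hx
  refine ⟨x, fun h => ?_⟩
  -- the map y ↦ h • y is a bijective isometry, hence affine by Mazur–Ulam
  set e : H ≃ᵢ H := ⟨MulAction.toPerm h, hiso h⟩ with he
  have hecoe : ∀ y : H, e y = h • y := fun y => rfl
  set f := e.toRealAffineIsometryEquiv with hf
  have hfcoe : ∀ y : H, f y = h • y := fun y => by
    rw [hf, IsometryEquiv.coeFn_toRealAffineIsometryEquiv]; exact hecoe y
  set L := f.toAffineMap.linear with hL
  have haff : ∀ y : H, h • y = L y + h • (0 : H) := by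
    intro y
    have := f.toAffineMap.map_vadd (0 : H) y
    simp only [vadd_eq_add, add_zero] at this
    have h1 : f.toAffineMap y = f y := rfl
    have h2 : f.toAffineMap (0 : H) = f (0 : H) := rfl
    rw [h1, h2, hfcoe, hfcoe] at this
    exact this
  calc h • x = L x + h • 0 := haff x
    _ = ((n : ℝ)⁻¹) • ∑ g : G, L (g • (0 : H)) + h • 0 := by
        rw [hx, map_smul, map_sum]
    _ = ((n : ℝ)⁻¹) • ∑ g : G, (h • (g • (0 : H)) - h • (0:H)) + h • 0 := by
        congr 2; refine Finset.sum_congr rfl fun g _ => ?_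
        rw [haff (g • (0 : H))]; abel
    _ = ((n : ℝ)⁻¹) • ((∑ g : G, (h * g) • (0 : H)) - n • (h • (0:H))) + h • 0 := by
        rw [Finset.sum_sub_distrib, Finset.sum_const, Finset.card_univ]
        simp [mul_smul]; rfl
    _ = x := by
        rw [Fintype.sum_equiv (Equiv.mulLeft h) (fun g : G => (h * g) • (0 : H))
          (fun g : G => g • (0 : H)) (fun g => rfl)]
        rw [smul_sub, hx]
        rw [← Nat.cast_smul_eq_nsmul ℝ n (h • (0:H)), smul_smul, inv_mul_cancel₀ hn0, one_smul]
        abel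
end

section
/- Let N be a finitely generated, torsion-free nilpotent group acting by isometries on a finite-dimensional real inner product space E. If g ∈ N satisfies g^m ∈ [N,N] for some m > 0, then g has a fixed point in E. -/
open Submodule QuotientGroup

universe u v

theorem aux_exists_center_ne_one {G : Type*} [Group G] [Group.IsNilpotent G] [Nontrivial G] :
    ∃ z : G, z ∈ Subgroup.center G ∧ z ≠ 1 := by
  by_contra hcon
  push_neg at hcon
  have hbot : Subgroup.center G = ⊥ := by
    ext x
    simp only [Subgroup.mem_bot]
    exact ⟨fun hx => hcon x hx, fun hx => hx ▸ Subgroup.one_mem _⟩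
  obtain ⟨n, hn⟩ := Group.IsNilpotent.nilpotent G
  have hall : ∀ k, Subgroup.upperCentralSeries G k = ⊥ := by
    intro k
    induction k with
    | zero => simp
    | succ k ih =>
      ext x
      simp only [Subgroup.mem_bot]
      constructor
      · intro hx
        have hc : x ∈ Subgroup.center G := by
          rw [Subgroup.mem_center_iff]
          intro y
          have h1 := mem_upperCentralSeries_succ_iff.mp hx y
          rw [ih, Subgroup.mem_bot, commutatorElement_def, mul_inv_eq_one, mul_inv_eq_iff_eq_mul] at h1
          exact h1.symm
        rw [hbot, Subgroup.mem_bot] at hc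
        exact hc
      · rintro rfl; exact Subgroup.one_mem _
  rw [hall n] at hn
  obtain ⟨a, b, hab⟩ := exists_pair_ne G
  have ha : a ∈ (⊥ : Subgroup G) := hn ▸ Subgroup.mem_top a
  have hb : b ∈ (⊥ : Subgroup G) := hn ▸ Subgroup.mem_top b
  rw [Subgroup.mem_bot] at ha hb
  exact hab (ha.trans hb.symm)

/-- A nilpotent group of affine isometries of a f.d. real inner product space whose linear
parts have no nonzero common fixed vector has a global fixed point. -/
theorem aux_global_fixed : ∀ (d : ℕ) (E : Type u) [NormedAddCommGroup E]
    [InnerProductSpace ℝ E] [FiniteDimensional ℝ E] (N : Type v) [Group N] [Group.IsNilpotent N]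
    (A : N → E →ₗᵢ[ℝ] E) (b : N → E),
    (∀ g h x, A (g * h) x = A g (A h x)) → (∀ g h, b (g * h) = A g (b h) + b g) →
    (∀ v : E, (∀ n, A n v = v) → v = 0) → Module.finrank ℝ E ≤ d →
    ∃ x : E, ∀ n, A n x + b n = x := by
  intro d
  induction d with
  | zero =>
    intro E _ _ _ N _ _ A b hmul hb hV hd
    have : Subsingleton E := Module.finrank_zero_iff.mp (Nat.le_zero.mp hd)
    exact ⟨0, fun n => Subsingleton.elim _ _⟩
  | succ d ih =>
    intro E _ _ _ N _ _ A b hmul hb hV hd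
    by_cases htriv : ∀ (n : N) (x : E), A n x + b n = x
    · exact ⟨0, fun n => htriv n 0⟩
    push_neg at htriv
    obtain ⟨n0, x0, hn0⟩ := htriv
    -- basic facts
    have hA1 : ∀ x : E, A 1 x = x := by
      intro x
      apply (A 1).injective
      have := hmul 1 1 x
      rw [one_mul] at this
      exact this.symm
    have hb1 : b 1 = 0 := by
      have h := hb 1 1
      rw [one_mul] at h
      have : A 1 (b 1) = 0 := by
        have := h.symm
        rwa [add_eq_right] at this
      rwa [hA1] at this
    have hsurj : ∀ n : N, Function.Surjective (A n) := by
      intro n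
      have := LinearMap.injective_iff_surjective.mp
        (show Function.Injective (A n).toLinearMap from (A n).injective)
      simpa using this
    -- the permutation representation
    have hbij : ∀ n : N, Function.Bijective (fun x : E => A n x + b n) := by
      intro n
      constructor
      · intro x y hxy
        exact (A n).injective (by simpa using hxy)
      · intro y
        obtain ⟨x, hx⟩ := hsurj n (y - b n)
        exact ⟨x, by show A n x + b n = y; rw [hx]; abel⟩
    set π : N →* Equiv.Perm E := MonoidHom.mk'
      (fun n => Equiv.ofBijective (fun x : E => A n x + b n) (hbij n))
      (by
        intro a c
        apply Equiv.ext
        intro x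
        show A (a * c) x + b (a * c) = A a (A c x + b c) + b a
        rw [hmul, hb, map_add]
        abel) with hπdef
    have hπ : ∀ (n : N) (x : E), π n x = A n x + b n := fun n x => rfl
    -- nontrivial quotient
    have hn0ker : n0 ∉ π.ker := by
      intro hk
      rw [MonoidHom.mem_ker] at hk
      have := congrFun (congrArg (fun e : Equiv.Perm E => (e : E → E)) hk) x0
      exact hn0 (by simpa [hπ] using this)
    haveI : Nontrivial (N ⧸ π.ker) :=
      ⟨⟨(n0 : N ⧸ π.ker), 1, by
        intro h
        exact hn0ker ((QuotientGroup.eq_one_iff n0).mp h)⟩⟩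
    obtain ⟨zb, hzc, hz1⟩ := aux_exists_center_ne_one (G := N ⧸ π.ker)
    obtain ⟨z, rfl⟩ := QuotientGroup.mk_surjective zb
    have hzker : z ∉ π.ker := fun h => hz1 ((QuotientGroup.eq_one_iff z).mpr h)
    have hzact : ∃ w : E, A z w + b z ≠ w := by
      by_contra hc
      push_neg at hc
      exact hzker (by
        rw [MonoidHom.mem_ker]
        apply Equiv.ext
        intro x
        simpa [hπ] using hc x)
    -- commutation relations
    have hcomm : ∀ (h : N) (x : E),
        A z (A h x) + (A z (b h) + b z) = A h (A z x) + (A h (b z) + b h) := by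
      intro h x
      have hq : ((z * h : N) : N ⧸ π.ker) = ((h * z : N) : N ⧸ π.ker) := by
        rw [QuotientGroup.mk_mul, QuotientGroup.mk_mul]
        exact (Subgroup.mem_center_iff.mp hzc ((h : N ⧸ π.ker))).symm
      have hmem : (z * h)⁻¹ * (h * z) ∈ π.ker := QuotientGroup.eq.mp hq
      rw [MonoidHom.mem_ker, map_mul, map_inv, inv_mul_eq_one] at hmem
      have := congrFun (congrArg (fun e : Equiv.Perm E => (e : E → E)) hmem) x
      have h1 : A z (A h x) + A z (b h) + b z = A h (A z x) + A h (b z) + b h := by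
        simpa [hπ] using this
      simpa [add_assoc] using h1
    have C2 : ∀ h : N, A z (b h) + b z = A h (b z) + b h := by
      intro h
      have := hcomm h 0
      simpa using this
    have C1 : ∀ (h : N) (x : E), A z (A h x) = A h (A z x) := by
      intro h x
      have h1 := hcomm h x
      rw [C2 h] at h1
      exact add_right_cancel h1
    -- the linear part of z is nontrivial
    have hAzne : ∃ w : E, A z w ≠ w := by
      by_contra hc
      push_neg at hc
      have hbz : ∀ h : N, A h (b z) = b z := by
        intro h
        have := C2 h
        rw [hc (b h)] at this
        have : b z + b h = A h (b z) + b h := by rw [← this]; abel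
        exact (add_right_cancel this).symm
      have : b z = 0 := hV _ hbz
      obtain ⟨w, hw⟩ := hzact
      exact hw (by rw [hc w, this, add_zero])
    -- the fixed space of A z
    set T : E →ₗ[ℝ] E := (A z).toLinearMap - LinearMap.id with hTdef
    have hT : ∀ x : E, T x = A z x - x := by
      intro x
      simp [hTdef]
    set F : Submodule ℝ E := LinearMap.ker T with hFdef
    have hmemF : ∀ x : E, x ∈ F ↔ A z x = x := by
      intro x
      rw [hFdef, LinearMap.mem_ker, hT, sub_eq_zero]
    have hFne : F ≠ ⊤ := by
      obtain ⟨w, hw⟩ := hAzne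
      intro h
      exact hw ((hmemF w).mp (h ▸ Submodule.mem_top))
    have hdisj : ∀ y : E, y ∈ F → y ∈ Fᗮ → y = 0 := by
      intro y h1 h2
      have : y ∈ F ⊓ Fᗮ := ⟨h1, h2⟩
      rwa [Submodule.inf_orthogonal_eq_bot, Submodule.mem_bot] at this
    have hFmap : ∀ (h : N) (x : E), x ∈ F → A h x ∈ F := by
      intro h x hx
      rw [hmemF]
      rw [C1, (hmemF x).mp hx]
    have horthmap : ∀ w : E, w ∈ Fᗮ → A z w - w ∈ Fᗮ := by
      intro w hw
      rw [Submodule.mem_orthogonal]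
      intro u hu
      have h1 : (inner ℝ u (A z w) : ℝ) = inner ℝ u w := by
        conv_lhs => rw [← (hmemF u).mp hu]
        exact (A z).inner_map_map u w
      rw [inner_sub_right, h1, sub_self]
    have horth' : ∀ x ∈ Fᗮ, T x ∈ Fᗮ := by
      intro x hx
      rw [hT]
      exact horthmap x hx
    set S : ↥Fᗮ →ₗ[ℝ] ↥Fᗮ := T.restrict horth' with hSdef
    have hSinj : Function.Injective S := by
      rw [← LinearMap.ker_eq_bot, LinearMap.ker_eq_bot']
      intro q hq
      have hcoe : A z (q : E) - (q : E) = 0 := by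
        have := congrArg Subtype.val hq
        rw [hSdef] at this
        rw [LinearMap.restrict_coe_apply] at this
        rw [← hT]
        simpa using this
      have hqF : (q : E) ∈ F := (hmemF _).mpr (by rwa [sub_eq_zero] at hcoe)
      exact Subtype.ext (hdisj _ hqF q.2)
    have hSsurj : Function.Surjective S := LinearMap.injective_iff_surjective.mp hSinj
    set P := orthogonalProjection F with hPdef
    have hc : b z - ↑(P (b z)) ∈ Fᗮ := Submodule.sub_starProjection_mem_orthogonal _
    obtain ⟨q1, hq1⟩ := hSsurj (-⟨b z - ↑(P (b z)), hc⟩)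
    set x1 : E := ↑q1 with hx1def
    have hx1 : A z x1 - x1 = -(b z - ↑(P (b z))) := by
      have h := congrArg Subtype.val hq1
      rw [hSdef, LinearMap.restrict_coe_apply] at h
      rw [← hT]
      simpa using h
    have hx1F : A z x1 + b z - x1 ∈ F := by
      have heq : A z x1 + b z - x1 = ↑(P (b z)) := by
        have : A z x1 + b z - x1 = (A z x1 - x1) + b z := by abel
        rw [this, hx1]; abel
      rw [heq]
      exact Submodule.coe_mem _
    have hMinv : ∀ (h : N) (x : E), A z x + b z - x ∈ F →
        A z (A h x + b h) + b z - (A h x + b h) ∈ F := by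
      intro h x hx
      have e2' : A h (b z) = A z (b h) + b z - b h := by
        rw [eq_sub_iff_add_eq]
        exact (C2 h).symm
      have key : A z (A h x + b h) + b z - (A h x + b h) = A h (A z x + b z - x) := by
        simp only [map_add, map_sub]
        rw [C1 h x, e2']
        abel
      rw [key]
      exact hFmap h _ hx
    have hMsub : ∀ x : E, A z x + b z - x ∈ F → x - x1 ∈ F := by
      intro x hx
      set dd := x - x1 with hdd
      have hdF : A z dd - dd ∈ F := by
        have heq : A z dd - dd = (A z x + b z - x) - (A z x1 + b z - x1) := by
          simp only [hdd, map_sub]; abel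
        rw [heq]
        exact Submodule.sub_mem F hx hx1F
      have hqo : dd - ↑(P dd) ∈ Fᗮ := Submodule.sub_starProjection_mem_orthogonal _
      have hPd : A z ↑(P dd) = ↑(P dd) := (hmemF _).mp (Submodule.coe_mem _)
      have hsplit : A z dd - dd = A z (dd - ↑(P dd)) - (dd - ↑(P dd)) := by
        simp only [map_sub, hPd]; abel
      have h1 : A z (dd - ↑(P dd)) - (dd - ↑(P dd)) ∈ F := hsplit ▸ hdF
      have h2 : A z (dd - ↑(P dd)) - (dd - ↑(P dd)) ∈ Fᗮ := horthmap _ hqo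
      have h0 : A z (dd - ↑(P dd)) - (dd - ↑(P dd)) = 0 := hdisj _ h1 h2
      have h3 : dd - ↑(P dd) ∈ F := (hmemF _).mpr (by rwa [sub_eq_zero] at h0)
      have h4 : dd - ↑(P dd) = 0 := hdisj _ h3 hqo
      have h5 : dd = ↑(P dd) := by rwa [sub_eq_zero] at h4
      rw [h5]
      exact Submodule.coe_mem _
    have hx1inv : ∀ h : N, A h x1 + b h - x1 ∈ F := fun h => hMsub _ (hMinv h x1 hx1F)
    -- restricted action
    set A' : N → ↥F →ₗᵢ[ℝ] ↥F := fun n =>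
      ⟨(A n).toLinearMap.restrict (fun x hx => hFmap n x hx), by
        intro y
        rw [← Submodule.norm_coe, LinearMap.restrict_coe_apply]
        simpa using (A n).norm_map (y : E)⟩ with hA'def
    have hA'coe : ∀ (n : N) (y : ↥F), (A' n y : E) = A n (y : E) := by
      intro n y
      simp [hA'def, LinearMap.restrict_coe_apply]
    set b' : N → ↥F := fun n => ⟨A n x1 + b n - x1, hx1inv n⟩ with hb'def
    have hmul' : ∀ (g h : N) (y : ↥F), A' (g * h) y = A' g (A' h y) := by
      intro g h y
      apply Subtype.ext
      rw [hA'coe, hA'coe, hA'coe, hmul]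
    have hb' : ∀ g h : N, b' (g * h) = A' g (b' h) + b' g := by
      intro g h
      apply Subtype.ext
      rw [Submodule.coe_add, hA'coe]
      show A (g * h) x1 + b (g * h) - x1 = A g (A h x1 + b h - x1) + (A g x1 + b g - x1)
      rw [hmul, hb]
      simp only [map_add, map_sub]
      abel
    have hV' : ∀ v : ↥F, (∀ n, A' n v = v) → v = 0 := by
      intro v hv
      apply Subtype.ext
      have : ∀ n : N, A n (v : E) = (v : E) := by
        intro n
        have := congrArg Subtype.val (hv n)
        rwa [hA'coe] at this
      rw [Submodule.coe_zero]
      exact hV _ this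
    have hd' : Module.finrank ℝ ↥F ≤ d := by
      have hlt : Module.finrank ℝ ↥F < Module.finrank ℝ E :=
        Submodule.finrank_lt hFne
      omega
    obtain ⟨y, hy⟩ := ih ↥F N A' b' hmul' hb' hV' hd'
    refine ⟨x1 + ↑y, fun n => ?_⟩
    have hcoe := congrArg Subtype.val (hy n)
    rw [Submodule.coe_add, hA'coe] at hcoe
    -- hcoe : A n ↑y + (A n x1 + b n - x1) = ↑y
    have : A n (x1 + ↑y) + b n = (A n (y:E) + (A n x1 + b n - x1)) + x1 := by
      rw [map_add]; abel
    rw [this, hcoe]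
    abel


/-- Main inductive lemma: splitting off the common fixed subspace of the linear parts. -/
theorem aux_main : ∀ (d : ℕ) (E : Type u) [NormedAddCommGroup E]
    [InnerProductSpace ℝ E] [FiniteDimensional ℝ E] (N : Type v) [Group N] [Group.IsNilpotent N]
    (A : N → E →ₗᵢ[ℝ] E) (b : N → E),
    (∀ g h x, A (g * h) x = A g (A h x)) → (∀ g h, b (g * h) = A g (b h) + b g) →
    ∀ (g : N) (m : ℕ), 0 < m → g ^ m ∈ commutator N → Module.finrank ℝ E ≤ d →
    ∃ x : E, A g x + b g = x := by
  intro d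
  induction d with
  | zero =>
    intro E _ _ _ N _ _ A b hmul hb g m hm hg hd
    have : Subsingleton E := Module.finrank_zero_iff.mp (Nat.le_zero.mp hd)
    exact ⟨0, Subsingleton.elim _ _⟩
  | succ d ih =>
    intro E _ _ _ N _ _ A b hmul hb g m hm hg hd
    -- the common fixed subspace of the linear parts
    set V : Submodule ℝ E := ⨅ n : N, LinearMap.ker ((A n).toLinearMap - LinearMap.id) with hVdef
    have hmemV : ∀ x : E, x ∈ V ↔ ∀ n : N, A n x = x := by
      intro x
      rw [hVdef, Submodule.mem_iInf]
      apply forall_congr'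
      intro n
      rw [LinearMap.mem_ker]
      constructor
      · intro h
        have : A n x - x = 0 := by simpa using h
        rwa [sub_eq_zero] at this
      · intro h
        simp [h]
    by_cases hV : V = ⊥
    · -- no common fixed vector: the whole group has a fixed point
      obtain ⟨x, hx⟩ := aux_global_fixed (d + 1) E N A b hmul hb
        (fun v hv => by
          have : v ∈ V := (hmemV v).mpr hv
          rwa [hV, Submodule.mem_bot] at this) hd
      exact ⟨x, hx g⟩
    · -- split off V
      set W : Submodule ℝ E := Vᗮ with hWdef
      have hWmap : ∀ (n : N) (x : E), x ∈ W → A n x ∈ W := by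
        intro n x hx
        rw [hWdef, Submodule.mem_orthogonal]
        intro u hu
        have h1 : (inner ℝ u (A n x) : ℝ) = inner ℝ u x := by
          conv_lhs => rw [← (hmemV u).mp hu n]
          exact (A n).inner_map_map u x
        rw [h1]
        exact (Submodule.mem_orthogonal V x).mp hx u hu
      have hWperp : ∀ y : E, y ∈ Wᗮ → y ∈ V := by
        intro y hy
        rw [hWdef, Submodule.orthogonal_orthogonal] at hy
        exact hy
      set PV := orthogonalProjection V with hPVdef
      set PW := orthogonalProjection W with hPWdef
      -- the projection to V of the cocycle is a homomorphism
      have hprojV : ∀ (n : N) (x : E), PV (A n x) = PV x := by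
        intro n x
        have hmemv : ((PV x : E)) ∈ V := Submodule.coe_mem _
        have horth : A n x - ↑(PV x) ∈ Vᗮ := by
          have h1 : A n x - ↑(PV x) = A n (x - ↑(PV x)) := by
            rw [map_sub, (hmemV _).mp hmemv n]
          rw [h1]
          exact hWmap n _ (Submodule.sub_starProjection_mem_orthogonal x)
        exact Subtype.ext (Submodule.eq_starProjection_of_mem_orthogonal hmemv horth)
      -- the translation homomorphism kills the commutator subgroup
      set φ : N →* Multiplicative ↥V := MonoidHom.mk'
        (fun n => Multiplicative.ofAdd (PV (b n)))
        (by
          intro a c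
          have : PV (b (a * c)) = PV (b a) + PV (b c) := by
            rw [hb, map_add, hprojV, add_comm]
          simp only [this]
          rfl) with hφdef
      have hφg : PV (b (g ^ m)) = m • PV (b g) := by
        have h1 : φ (g ^ m) = (φ g) ^ m := map_pow φ g m
        have h2 := congrArg Multiplicative.toAdd h1
        simpa [hφdef] using h2
      have hker : PV (b (g ^ m)) = 0 := by
        have h1 : φ (g ^ m) = 1 := Abelianization.commutator_subset_ker φ hg
        have h2 := congrArg Multiplicative.toAdd h1
        simpa [hφdef] using h2
      have hPVbg : PV (b g) = 0 := by
        have h1 : (m : ℝ) • PV (b g) = 0 := by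
          rw [← Nat.cast_smul_eq_nsmul ℝ m (PV (b g))] at hφg
          rw [← hφg]
          exact hker
        rcases smul_eq_zero.mp h1 with h | h
        · exact absurd (Nat.cast_eq_zero.mp h) (Nat.pos_iff_ne_zero.mp hm)
        · exact h
      have hbgW : b g ∈ W := by
        have : b g - ↑(orthogonalProjection V (b g)) ∈ Vᗮ := Submodule.sub_starProjection_mem_orthogonal (K := V) (b g)
        rwa [← hPVdef, hPVbg, Submodule.coe_zero, sub_zero, ← hWdef] at this
      -- restricted action on W
      set A' : N → ↥W →ₗᵢ[ℝ] ↥W := fun n =>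
        ⟨(A n).toLinearMap.restrict (fun x hx => hWmap n x hx), by
          intro y
          rw [← Submodule.norm_coe, LinearMap.restrict_coe_apply]
          simpa using (A n).norm_map (y : E)⟩ with hA'def
      have hA'coe : ∀ (n : N) (y : ↥W), (A' n y : E) = A n (y : E) := by
        intro n y
        simp [hA'def, LinearMap.restrict_coe_apply]
      set b' : N → ↥W := fun n => PW (b n) with hb'def
      have hprojW : ∀ (n : N) (x : E), (PW (A n x) : E) = A n ↑(PW x) := by
        intro n x
        have hmemw : A n ↑(PW x) ∈ W := hWmap n _ (Submodule.coe_mem _)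
        have horth : A n x - A n ↑(PW x) ∈ Wᗮ := by
          rw [← map_sub]
          have h1 : x - ↑(PW x) ∈ Wᗮ := Submodule.sub_starProjection_mem_orthogonal x
          have h2 : x - ↑(PW x) ∈ V := hWperp _ h1
          have h3 : A n (x - ↑(PW x)) = x - ↑(PW x) := (hmemV _).mp h2 n
          rw [h3]
          exact h1
        exact Submodule.eq_starProjection_of_mem_orthogonal hmemw horth
      have hmul' : ∀ (a c : N) (y : ↥W), A' (a * c) y = A' a (A' c y) := by
        intro a c y
        apply Subtype.ext
        rw [hA'coe, hA'coe, hA'coe, hmul]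
      have hb' : ∀ a c : N, b' (a * c) = A' a (b' c) + b' a := by
        intro a c
        apply Subtype.ext
        rw [hb'def]
        simp only [Submodule.coe_add, hA'coe]
        rw [hb, map_add, Submodule.coe_add, hprojW]
      have hd' : Module.finrank ℝ ↥W ≤ d := by
        have hrk := Submodule.finrank_add_finrank_orthogonal (K := V)
        have hVpos : 0 < Module.finrank ℝ ↥V := by
          haveI : Nontrivial ↥V := Submodule.nontrivial_iff_ne_bot.mpr hV
          exact Module.finrank_pos
        rw [← hWdef] at hrk
        omega
      obtain ⟨y, hy⟩ := ih ↥W N A' b' hmul' hb' g m hm hg hd'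
      refine ⟨(y : E), ?_⟩
      have hcoe := congrArg Subtype.val hy
      rw [Submodule.coe_add, hA'coe] at hcoe
      have hbg' : ((b' g : ↥W) : E) = b g := by
        show ((PW (b g) : ↥W) : E) = b g
        have h2 : PW (((⟨b g, hbgW⟩ : ↥W) : E)) = ⟨b g, hbgW⟩ :=
          orthogonalProjection_mem_subspace_eq_self (K := W) ⟨b g, hbgW⟩
        rw [show PW (b g) = PW ((⟨b g, hbgW⟩ : ↥W) : E) from rfl, h2]
      rw [hbg'] at hcoe
      exact hcoe


/-- A monoid is torsion-free if no element except `1` has finite order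
(the Mathlib definition of December 2024, since removed). -/
def Monoid.IsTorsionFree (G : Type*) [Monoid G] : Prop :=
  ∀ g : G, g ≠ 1 → ¬IsOfFinOrder g

/-- If a finitely generated torsion-free nilpotent group `N` acts by isometries on a
finite-dimensional real inner product space `E`, then any `g ∈ N` with `g ^ m` in the
commutator subgroup for some `m > 0` has a fixed point in `E`. -/
theorem nilpotent_action_power_in_commutator_has_fixed_point
    (N : Type*) [Group N] [Group.FG N] [Group.IsNilpotent N]
    (htf : Monoid.IsTorsionFree N)
    (E : Type*) [NormedAddCommGroup E] [InnerProductSpace ℝ E] [FiniteDimensional ℝ E]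
    [MulAction N E] (hiso : ∀ g : N, Isometry (fun x : E => g • x))
    (g : N) (m : ℕ) (hm : 0 < m) (hg : g ^ m ∈ commutator N) :
    ∃ x : E, g • x = x := by
  have hbij : ∀ n : N, Function.Bijective (fun x : E => n • x) := by
    intro n
    constructor
    · intro x y h
      simpa using congrArg (fun t => n⁻¹ • t) h
    · intro y
      exact ⟨n⁻¹ • y, smul_inv_smul n y⟩
  set f : N → (E ≃ᵢ E) := fun n =>
    ⟨Equiv.ofBijective (fun x : E => n • x) (hbij n), hiso n⟩ with hfdef
  have hfapp : ∀ (n : N) (x : E), f n x = n • x := fun n x => rfl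
  set A : N → (E →ₗᵢ[ℝ] E) := fun n =>
    (f n).toRealLinearIsometryEquiv.toLinearIsometry with hAdef
  set b : N → E := fun n => n • (0 : E) with hbdef
  have key : ∀ (n : N) (x : E), A n x = n • x - n • (0 : E) := by
    intro n x
    have h1 := (f n).toRealLinearIsometryEquiv_apply x
    rw [hfapp, hfapp] at h1
    exact h1
  have hsmul : ∀ (n : N) (x : E), n • x = A n x + b n := by
    intro n x
    rw [key, hbdef]
    abel
  have hmul : ∀ (a c : N) (x : E), A (a * c) x = A a (A c x) := by
    intro a c x
    have h1 : A a (A c x) = A a (c • x) - A a (c • (0 : E)) := by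
      rw [key c, map_sub]
    rw [h1, key a, key a, key (a * c), mul_smul, mul_smul]
    abel
  have hb : ∀ a c : N, b (a * c) = A a (b c) + b a := by
    intro a c
    show (a * c) • (0 : E) = A a (c • (0 : E)) + a • (0 : E)
    rw [key a, mul_smul]
    abel
  obtain ⟨x, hx⟩ := aux_main (Module.finrank ℝ E) E N A b hmul hb g m hm hg le_rfl
  exact ⟨x, by rw [hsmul g x, hx]⟩
end

section
/- Let N be a finitely generated, torsion-free nilpotent group acting by isometries on a finite-dimensional real inner product space E. If N is generated by a set of elements each of which has a fixed point in E, then N has a global fixed point: there exists x ∈ E with g·x = x for all g ∈ N. -/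
open scoped RealInnerProductSpace

theorem center_ne_bot_of_nilpotent (G : Type*) [Group G] [Group.IsNilpotent G] [Nontrivial G] :
    ∃ c : G, c ≠ 1 ∧ c ∈ Subgroup.center G := by
  by_contra h
  push_neg at h
  have hcen : Subgroup.center G = ⊥ := by
    rw [eq_bot_iff]
    intro x hx
    by_contra hx1
    exact (h x (by simpa using hx1)) hx
  have hucs : ∀ n, Subgroup.upperCentralSeries G n = ⊥ := by
    intro n
    induction n with
    | zero => simp [Subgroup.upperCentralSeries_zero]
    | succ n ih =>
      rw [eq_bot_iff]
      intro x hx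
      rw [Subgroup.mem_upperCentralSeries_succ_iff] at hx
      have hxc : x ∈ Subgroup.center G := by
        rw [Subgroup.mem_center_iff]
        intro y
        have hmem := hx y
        rw [ih] at hmem
        have h1 : x * y * x⁻¹ * y⁻¹ = 1 := Subgroup.mem_bot.mp hmem
        have h2 : x * y = y * x := by
          have := congrArg (· * (y * x)) h1
          simpa [mul_assoc] using this
        exact h2.symm
      rw [hcen] at hxc; exact hxc
  obtain ⟨n, hn⟩ := Group.IsNilpotent.nilpotent (G := G)
  rw [hucs n] at hn
  obtain ⟨a, b, hab⟩ := exists_pair_ne G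
  have ha : a ∈ (⊥ : Subgroup G) := hn ▸ Subgroup.mem_top a
  have hb : b ∈ (⊥ : Subgroup G) := hn ▸ Subgroup.mem_top b
  exact hab ((Subgroup.mem_bot.mp ha).trans (Subgroup.mem_bot.mp hb).symm)

universe u v

theorem aux_fixed_point : ∀ (n : ℕ) (E : Type u) [NormedAddCommGroup E] [InnerProductSpace ℝ E]
    [FiniteDimensional ℝ E], Module.finrank ℝ E ≤ n →
    ∀ (N : Type v) [Group N] [Group.IsNilpotent N] [MulAction N E],
    (∀ g : N, Isometry (fun x : E => g • x)) →
    ∀ (S : Set N), Subgroup.closure S = ⊤ →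
    (∀ g ∈ S, ∃ x : E, g • x = x) →
    ∃ x : E, ∀ g : N, g • x = x := by
  intro n
  induction n with
  | zero =>
    intro E _ _ _ hrank N _ _ _ hiso S hgen hfix
    have h0 : Module.finrank ℝ E = 0 := Nat.le_zero.mp hrank
    have hsub : Subsingleton E := Module.finrank_zero_iff.mp h0
    exact ⟨0, fun g => Subsingleton.elim _ _⟩
  | succ n ih =>
    intro E _ _ _ hrank N _ _ _ hiso S hgen hfix
    by_cases htriv : ∀ (g : N) (x : E), g • x = x
    · exact ⟨0, fun g => htriv g 0⟩
    push_neg at htriv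
    obtain ⟨g₀, x₀, hg₀⟩ := htriv
    set A : N → (E ≃ₗᵢ[ℝ] E) := fun g =>
      IsometryEquiv.toRealLinearIsometryEquiv
        ⟨⟨fun x => g • x, fun x => g⁻¹ • x, fun x => inv_smul_smul g x,
          fun x => smul_inv_smul g x⟩, hiso g⟩ with hAdef
    have hA : ∀ (g : N) (x : E), A g x = g • x - g • 0 := by
      intro g x
      rw [hAdef]
      exact IsometryEquiv.toRealLinearIsometryEquiv_apply _ x
    have hsmul : ∀ (g : N) (x : E), g • x = A g x + g • 0 := by
      intro g x; rw [hA]; abel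
    have hAmul : ∀ (g h : N) (x : E), A g (A h x) = A (g * h) x := by
      intro g h x
      rw [hA h, map_sub, hA g, hA g, hA (g * h), mul_smul, mul_smul]
      abel
    have hAone : ∀ x : E, A (1 : N) x = x := by
      intro x; rw [hA, one_smul, one_smul, sub_zero]
    have hAinvA : ∀ (g : N) (x : E), A g⁻¹ (A g x) = x := by
      intro g x; rw [hAmul, inv_mul_cancel, hAone]
    have hAAinv : ∀ (g : N) (x : E), A g (A g⁻¹ x) = x := by
      intro g x; rw [hAmul, mul_inv_cancel, hAone]
    have hadj : ∀ (g : N) (x y : E), ⟪A g x, y⟫ = ⟪x, A g⁻¹ y⟫ := by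
      intro g x y
      conv_lhs => rw [← hAAinv g y]
      rw [LinearIsometryEquiv.inner_map_map]
    set V : Submodule ℝ E :=
      { carrier := {x | ∀ g : N, A g x = x}
        add_mem' := fun ha hb g => by rw [map_add, ha g, hb g]
        zero_mem' := fun g => by rw [map_zero]
        smul_mem' := fun c x hx g => by rw [map_smul, hx g] } with hVdef
    have hmemV : ∀ {x : E}, x ∈ V ↔ ∀ g : N, A g x = x := by
      intro x; rw [hVdef]; exact Iff.rfl
    have hbV : ∀ (g : N), ∀ v ∈ V, ⟪g • (0 : E), v⟫ = 0 := by
      have key : ∀ g ∈ Subgroup.closure S, ∀ v ∈ V, ⟪g • (0 : E), v⟫ = 0 := by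
        intro g hg
        induction hg using Subgroup.closure_induction with
        | mem g hgS =>
          intro v hv
          obtain ⟨y, hy⟩ := hfix g hgS
          have hb0 : g • (0 : E) = y - A g y := by rw [hA, hy]; abel
          rw [hb0, inner_sub_left, hadj, (hmemV.mp hv) g⁻¹, sub_self]
        | one =>
          intro v hv
          rw [one_smul]
          exact inner_zero_left v
        | mul x y hx hy px py =>
          intro v hv
          rw [mul_smul, hsmul x (y • 0), inner_add_left, hadj, (hmemV.mp hv) x⁻¹,
            py v hv, px v hv, add_zero]
        | inv x hx px =>
          intro v hv
          have h1 : A x (x⁻¹ • (0 : E)) = -(x • 0) := by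
            rw [hA, smul_inv_smul, zero_sub]
          have h2 : ⟪x⁻¹ • (0 : E), v⟫ = ⟪A x (x⁻¹ • (0 : E)), A x v⟫ :=
            (LinearIsometryEquiv.inner_map_map _ _ _).symm
          rw [h2, (hmemV.mp hv) x, h1, inner_neg_left, px v hv, neg_zero]
      intro g
      exact key g (by rw [hgen]; trivial)
    obtain ⟨p, U, hUlt, hUinv⟩ :
        ∃ (p : E) (U : Submodule ℝ E), Module.finrank ℝ ↥U < Module.finrank ℝ E ∧
          ∀ (g : N), ∀ u ∈ U, g • (p + u) - p ∈ U := by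
      by_cases hV : V = ⊥
      · -- get a central element of the image
        set K : Subgroup N := (MulAction.toPermHom N E).ker with hKdef
        have hK : ∀ {a : N}, a ∈ K ↔ ∀ x : E, a • x = x := by
          intro a
          rw [hKdef, MonoidHom.mem_ker, Equiv.ext_iff]
          exact Iff.rfl
        have hQnt : Nontrivial (N ⧸ K) := by
          refine ⟨⟨QuotientGroup.mk g₀, 1, ?_⟩⟩
          rw [Ne, QuotientGroup.eq_one_iff]
          intro hk
          exact hg₀ (hK.mp hk x₀)
        obtain ⟨cbar, hc1, hcZ⟩ := center_ne_bot_of_nilpotent (N ⧸ K)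
        obtain ⟨c, rfl⟩ := QuotientGroup.mk_surjective cbar
        have hc_nontriv : ∃ x : E, c • x ≠ x := by
          by_contra hcon
          push_neg at hcon
          exact hc1 (QuotientGroup.eq_one_iff c |>.mpr (hK.mpr hcon))
        have hccomm : ∀ (g : N) (x : E), c • (g • x) = g • (c • x) := by
          intro g x
          have h1 : (QuotientGroup.mk (c * g) : N ⧸ K) = QuotientGroup.mk (g * c) := by
            rw [QuotientGroup.mk_mul, QuotientGroup.mk_mul]
            exact (Subgroup.mem_center_iff.mp hcZ (QuotientGroup.mk g)).symm
          have h2 : (c * g)⁻¹ * (g * c) ∈ K := QuotientGroup.eq.mp h1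
          have h3 := hK.mp h2 x
          calc c • (g • x) = (c * g) • x := (mul_smul c g x).symm
            _ = (c * g) • (((c * g)⁻¹ * (g * c)) • x) := by rw [h3]
            _ = (g * c) • x := by rw [← mul_smul]; group
            _ = g • (c • x) := mul_smul g c x
        set U : Submodule ℝ E :=
          { carrier := {u | A c u = u}
            add_mem' := fun ha hb => by
              show A c (_ + _) = _
              rw [map_add, ha, hb]
            zero_mem' := by show A c 0 = 0; rw [map_zero]
            smul_mem' := fun r x hx => by
              show A c (r • x) = r • x
              rw [map_smul, hx] } with hUdef
        have hmemU : ∀ {x : E}, x ∈ U ↔ A c x = x := by intro x; rw [hUdef]; exact Iff.rfl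
        have hUc_inv : ∀ u ∈ U, A c⁻¹ u = u := by
          intro u hu
          conv_lhs => rw [← hmemU.mp hu]
          rw [hAinvA]
        have hUg : ∀ (g : N), ∀ u ∈ U, A g u ∈ U := by
          intro g u hu
          rw [hmemU]
          have hfun : ∀ x : E, (c * g) • x = (g * c) • x := fun x => by
            rw [mul_smul, mul_smul, hccomm]
          calc A c (A g u) = A (c * g) u := hAmul c g u
            _ = (c * g) • u - (c * g) • 0 := hA _ _
            _ = (g * c) • u - (g * c) • 0 := by rw [hfun, hfun]
            _ = A (g * c) u := (hA _ _).symm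
            _ = A g (A c u) := (hAmul g c u).symm
            _ = A g u := by rw [hmemU.mp hu]
        set u₀ : ↥U := Submodule.orthogonalProjection U (c • (0 : E)) with hu₀def
        have hu₀ : ∀ u ∈ U, ⟪c • (0 : E), u⟫ = ⟪(u₀ : E), u⟫ := by
          intro u hu
          have hperp : c • (0 : E) - u₀ ∈ Uᗮ := Submodule.sub_starProjection_mem_orthogonal (K := U) _
          have h0 := (Submodule.mem_orthogonal U _).mp hperp u hu
          rw [inner_sub_right] at h0
          calc ⟪c • (0 : E), u⟫ = ⟪u, c • (0 : E)⟫ := real_inner_comm _ _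
            _ = ⟪u, (u₀ : E)⟫ := by linarith
            _ = ⟪(u₀ : E), u⟫ := real_inner_comm _ _
        have hrel : ∀ (g : N), ∀ u ∈ U, ⟪c • (0 : E), u⟫ = ⟪c • (0 : E), A g⁻¹ u⟫ := by
          intro g u hu
          have hcomm0 : A c (g • (0 : E)) + c • 0 = A g (c • (0 : E)) + g • 0 := by
            have h := hccomm g (0 : E)
            rw [hsmul c (g • (0 : E)), hsmul g (c • (0 : E))] at h
            exact h
          have h1 := congrArg (fun z => ⟪z, u⟫) hcomm0
          simp only [inner_add_left] at h1
          have h2 : ⟪A c (g • (0 : E)), u⟫ = ⟪g • (0 : E), u⟫ := by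
            rw [hadj, hUc_inv u hu]
          have h3 : ⟪A g (c • (0 : E)), u⟫ = ⟪c • (0 : E), A g⁻¹ u⟫ := hadj _ _ _
          linarith
        have hAu₀ : ∀ g : N, A g (u₀ : E) = (u₀ : E) := by
          intro g
          have hu₀U : (u₀ : E) ∈ U := u₀.2
          have hdiff : (u₀ : E) - A g (u₀ : E) ∈ U := U.sub_mem hu₀U (hUg g _ hu₀U)
          have h1 : ∀ u ∈ U, ⟪(u₀ : E) - A g (u₀ : E), u⟫ = 0 := by
            intro u hu
            have hAgiu : A g⁻¹ u ∈ U := hUg g⁻¹ u hu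
            have e1 : ⟪A g (u₀ : E), u⟫ = ⟪(u₀ : E), A g⁻¹ u⟫ := hadj _ _ _
            have e2 : ⟪(u₀ : E), A g⁻¹ u⟫ = ⟪c • (0 : E), A g⁻¹ u⟫ := (hu₀ _ hAgiu).symm
            have e3 : ⟪c • (0 : E), A g⁻¹ u⟫ = ⟪c • (0 : E), u⟫ := (hrel g u hu).symm
            have e4 : ⟪c • (0 : E), u⟫ = ⟪(u₀ : E), u⟫ := hu₀ u hu
            rw [inner_sub_left]
            linarith
          have hz := h1 _ hdiff
          have hz0 : (u₀ : E) - A g (u₀ : E) = 0 := inner_self_eq_zero.mp hz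
          exact (sub_eq_zero.mp hz0).symm
        have hu₀0 : (u₀ : E) = 0 := by
          have : (u₀ : E) ∈ V := hmemV.mpr (hAu₀)
          rw [hV] at this
          exact Submodule.mem_bot ℝ |>.mp this
        have hbcU : ∀ u ∈ U, ⟪c • (0 : E), u⟫ = 0 := by
          intro u hu
          rw [hu₀ u hu, hu₀0, inner_zero_left]
        -- ellipticity of c
        set T : E →ₗ[ℝ] E := LinearMap.id - ((A c).toLinearEquiv : E →ₗ[ℝ] E) with hTdef
        have hT : ∀ x : E, T x = x - A c x := by
          intro x
          rw [hTdef]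
          simp
        have hker : LinearMap.ker T = U := by
          ext x
          rw [LinearMap.mem_ker, hT, hmemU, sub_eq_zero, eq_comm]
        have hrange_le : LinearMap.range T ≤ Uᗮ := by
          rintro y ⟨x, rfl⟩
          rw [Submodule.mem_orthogonal]
          intro u hu
          rw [hT]
          calc ⟪u, x - A c x⟫ = ⟪x - A c x, u⟫ := real_inner_comm _ _
            _ = ⟪x, u⟫ - ⟪A c x, u⟫ := inner_sub_left _ _ _
            _ = ⟪x, u⟫ - ⟪x, A c⁻¹ u⟫ := by rw [hadj]
            _ = 0 := by rw [hUc_inv u hu, sub_self]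
        have hranks := LinearMap.finrank_range_add_finrank_ker T
        have horth := Submodule.finrank_add_finrank_orthogonal (K := U)
        rw [hker] at hranks
        have hrange_eq : LinearMap.range T = Uᗮ :=
          Submodule.eq_of_le_of_finrank_eq hrange_le (by omega)
        have hbc_mem : c • (0 : E) ∈ LinearMap.range T := by
          rw [hrange_eq, Submodule.mem_orthogonal]
          intro u hu
          rw [real_inner_comm]
          exact hbcU u hu
        obtain ⟨pc, hpc⟩ := hbc_mem
        rw [hT] at hpc
        have hcp : c • pc = pc := by
          rw [hsmul c pc, ← hpc]
          abel
        have hUneTop : U ≠ ⊤ := by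
          intro h
          obtain ⟨x, hx⟩ := hc_nontriv
          apply hx
          have hAcx : A c x = x := hmemU.mp (h ▸ Submodule.mem_top)
          have hApc : A c pc = pc := hmemU.mp (h ▸ Submodule.mem_top)
          have hbc0 : c • (0 : E) = 0 := by
            have h5 := hcp
            rw [hsmul c pc, hApc] at h5
            exact add_eq_left.mp h5
          rw [hsmul c x, hAcx, hbc0, add_zero]
        refine ⟨pc, U, Submodule.finrank_lt hUneTop, ?_⟩
        intro g u hu
        have hu' : A c u = u := hmemU.mp hu
        have hcpu : c • (pc + u) = pc + u := by
          calc c • (pc + u) = A c (pc + u) + c • 0 := hsmul _ _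
            _ = (A c pc + c • 0) + u := by rw [map_add, hu']; abel
            _ = c • pc + u := by rw [← hsmul]
            _ = pc + u := by rw [hcp]
        rw [hmemU]
        calc A c (g • (pc + u) - pc) = A c (g • (pc + u)) - A c pc := map_sub _ _ _
          _ = (c • (g • (pc + u)) - c • 0) - (c • pc - c • 0) := by rw [hA, hA]
          _ = c • (g • (pc + u)) - c • pc := by abel
          _ = g • (c • (pc + u)) - pc := by rw [hccomm, hcp]
          _ = g • (pc + u) - pc := by rw [hcpu]
      · refine ⟨0, Vᗮ, ?_, ?_⟩
        · have h1 := Submodule.finrank_add_finrank_orthogonal (K := V)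
          have h2 : Module.finrank ℝ ↥V ≠ 0 := by
            intro h
            exact hV (Submodule.finrank_eq_zero.mp h)
          omega
        · intro g u hu
          rw [zero_add, sub_zero]
          rw [Submodule.mem_orthogonal]
          intro v hv
          rw [real_inner_comm, hsmul g u, inner_add_left, hbV g v hv, add_zero, hadj,
            (hmemV.mp hv) g⁻¹, real_inner_comm]
          exact (Submodule.mem_orthogonal V u).mp hu v hv
    -- fixed points of elliptic elements on the slice
    have hfixU : ∀ g : N, (∃ y : E, g • y = y) → ∃ u ∈ U, g • (p + u) = p + u := by
      rintro g ⟨y, hy⟩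
      set u : ↥U := Submodule.orthogonalProjection U (y - p) with hudef
      have hu' : (y - p) - (u : E) ∈ Uᗮ := Submodule.sub_starProjection_mem_orthogonal (K := U) _
      have hzU : g • (p + (u : E)) - p ∈ U := hUinv g _ u.2
      set z : E := g • (p + (u : E)) - p with hzdef
      have hpz : p + z = g • (p + (u : E)) := by rw [hzdef]; abel
      have hdist : ‖y - (p + z)‖ = ‖(y - p) - (u : E)‖ := by
        have h1 := (hiso g).dist_eq y (p + (u : E))
        simp only [dist_eq_norm] at h1
        calc ‖y - (p + z)‖ = ‖g • y - g • (p + (u : E))‖ := by rw [hpz, hy]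
          _ = ‖y - (p + (u : E))‖ := h1
          _ = ‖(y - p) - (u : E)‖ := by rw [sub_add_eq_sub_sub]
      have horthog : ⟪(y - p) - (u : E), (u : E) - z⟫ = 0 := by
        rw [real_inner_comm]
        exact (Submodule.mem_orthogonal U _).mp hu' _ (U.sub_mem u.2 hzU)
      have hdecomp : y - (p + z) = ((y - p) - (u : E)) + ((u : E) - z) := by abel
      have hsq : ‖y - (p + z)‖ ^ 2 =
          ‖(y - p) - (u : E)‖ ^ 2 + 2 * ⟪(y - p) - (u : E), (u : E) - z⟫ + ‖(u : E) - z‖ ^ 2 := by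
        rw [hdecomp]; exact norm_add_sq_real _ _
      rw [horthog, hdist] at hsq
      have hnz : ‖(u : E) - z‖ ^ 2 = 0 := by linarith
      have huz : (u : E) - z = 0 := by
        have := pow_eq_zero_iff (n := 2) (by norm_num) |>.mp hnz
        exact norm_eq_zero.mp this
      refine ⟨u, u.2, ?_⟩
      rw [← hpz, ← sub_eq_zero.mp huz]
    -- the action restricted to the slice
    letI actU : MulAction N ↥U :=
      { smul := fun g u => ⟨g • (p + (u : E)) - p, hUinv g _ u.2⟩
        one_smul := fun u => Subtype.ext (by
          show (1 : N) • (p + (u : E)) - p = (u : E)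
          rw [one_smul]; abel)
        mul_smul := fun g h u => Subtype.ext (by
          show (g * h) • (p + (u : E)) - p = g • (p + (h • (p + (u : E)) - p)) - p
          have h4 : p + (h • (p + (u : E)) - p) = h • (p + (u : E)) := by abel
          rw [h4, mul_smul]) }
    have hsmulU : ∀ (g : N) (u : ↥U), ((g • u : ↥U) : E) = g • (p + (u : E)) - p :=
      fun g u => rfl
    have hisoU : ∀ g : N, Isometry (fun u : ↥U => g • u) := by
      intro g
      apply Isometry.of_dist_eq
      intro a b
      have h1 := (hiso g).dist_eq (p + (a : E)) (p + (b : E))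
      simp only [dist_eq_norm] at h1
      rw [Subtype.dist_eq, Subtype.dist_eq, hsmulU, hsmulU, dist_eq_norm, dist_eq_norm]
      have h2 : (g • (p + (a : E)) - p) - (g • (p + (b : E)) - p)
          = g • (p + (a : E)) - g • (p + (b : E)) := by abel
      have h3 : (p + (a : E)) - (p + (b : E)) = (a : E) - (b : E) := by abel
      rw [h2, h1, h3]
    have hfixU' : ∀ g ∈ S, ∃ u : ↥U, g • u = u := by
      intro g hgS
      obtain ⟨u, huU, hufix⟩ := hfixU g (hfix g hgS)
      refine ⟨⟨u, huU⟩, Subtype.ext ?_⟩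
      rw [hsmulU]
      show g • (p + u) - p = u
      rw [hufix]; abel
    have hle : Module.finrank ℝ ↥U ≤ n := by omega
    obtain ⟨ustar, hustar⟩ := ih ↥U hle N hisoU S hgen hfixU'
    refine ⟨p + (ustar : E), fun g => ?_⟩
    have h5 := congrArg Subtype.val (hustar g)
    rw [hsmulU] at h5
    have h6 : g • (p + (ustar : E)) = (ustar : E) + p := eq_add_of_sub_eq h5
    rw [h6]; abel

/-- If a finitely generated torsion-free nilpotent group `N` acts by isometries on a
finite-dimensional real inner product space `E` and `N` is generated by a set of
elements each of which has a fixed point, then `N` has a global fixed point. -/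
theorem nilpotent_action_generated_by_elliptics_has_global_fixed_point
    (N : Type*) [Group N] [Group.FG N] [Group.IsNilpotent N]
    (htf : Monoid.IsTorsionFree N)
    (E : Type*) [NormedAddCommGroup E] [InnerProductSpace ℝ E] [FiniteDimensional ℝ E]
    [MulAction N E] (hiso : ∀ g : N, Isometry (fun x : E => g • x))
    (S : Set N) (hgen : Subgroup.closure S = ⊤)
    (hfix : ∀ g ∈ S, ∃ x : E, g • x = x) :
    ∃ x : E, ∀ g : N, g • x = x := by
  exact aux_fixed_point (Module.finrank ℝ E) E le_rfl N hiso S hgen hfix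
end

section
/- Let Γ be a finitely generated abelian group acting by isometries on a finite-dimensional real inner product space E. Then there exists a nonempty affine subspace F ⊆ E which is invariant under Γ and on which every element of Γ acts as a translation. -/
/-- **Euclidean flat torus theorem for abelian groups.**  A finitely generated
abelian group acting by isometries on a finite-dimensional real inner product space
leaves invariant a nonempty affine subspace on which every element acts as a
translation. -/
theorem abelian_action_has_invariant_flat
    (Γ : Type*) [CommGroup Γ] [Group.FG Γ]
    (E : Type*) [NormedAddCommGroup E] [InnerProductSpace ℝ E] [FiniteDimensional ℝ E]
    [MulAction Γ E] (hiso : ∀ g : Γ, Isometry (fun x : E => g • x)) :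
    ∃ F : AffineSubspace ℝ E, (F : Set E).Nonempty ∧
      (∀ g : Γ, (fun x : E => g • x) '' (F : Set E) = F) ∧
      (∀ g : Γ, ∃ c ∈ F.direction, ∀ x ∈ F, g • x = x + c) := by
  classical
  haveI : Nonempty E := ⟨0⟩
  obtain ⟨S, hS⟩ : ∃ S : Finset Γ, Subgroup.closure (S : Set Γ) = ⊤ :=
    Group.FG.out
  -- each element acts as an affine isometry (Mazur–Ulam)
  set φ : Γ → E ≃ᵃⁱ[ℝ] E := fun g =>
    IsometryEquiv.toRealAffineIsometryEquiv
      { toFun := fun x => g • x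
        invFun := fun x => g⁻¹ • x
        left_inv := fun x => inv_smul_smul g x
        right_inv := fun x => smul_inv_smul g x
        isometry_toFun := hiso g } with hφ
  have hφapp : ∀ (g : Γ) (x : E), φ g x = g • x := by
    intro g x
    rw [hφ, IsometryEquiv.coeFn_toRealAffineIsometryEquiv]
    rfl
  -- the displacement affine map
  set Ψ : E →ᵃ[ℝ] PiLp 2 (fun _ : S => E) :=
    ((WithLp.linearEquiv 2 ℝ (∀ _ : S, E)).symm.toLinearMap.toAffineMap).comp
      (AffineMap.pi fun s : S => ((φ (s : Γ)).toAffineEquiv.toAffineMap -ᵥ AffineMap.id ℝ E))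
    with hΨdef
  have hΨ : ∀ (x : E) (s : S), Ψ x s = (s : Γ) • x - x := by
    intro x s
    simp [hΨdef, AffineMap.pi_apply, AffineMap.vsub_apply, hφapp]
  -- norm invariance of the displacement under the action
  have hnorm : ∀ (g : Γ) (x : E), ‖Ψ (g • x)‖ = ‖Ψ x‖ := by
    intro g x
    rw [PiLp.norm_eq_of_L2, PiLp.norm_eq_of_L2]
    congr 1
    refine Finset.sum_congr rfl fun s _ => ?_
    rw [hΨ, hΨ]
    have h1 : (s : Γ) • (g • x) = g • ((s : Γ) • x) := by
      rw [smul_smul, smul_smul, mul_comm]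
    rw [h1]
    have h2 : ∀ a b : E, ‖g • a - g • b‖ = ‖a - b‖ := by
      intro a b
      rw [← dist_eq_norm, ← dist_eq_norm]
      exact (hiso g).dist_eq a b
    rw [h2]
  -- the range of Ψ is a nonempty closed affine subspace
  set R : AffineSubspace ℝ (PiLp 2 (fun _ : S => E)) := (⊤ : AffineSubspace ℝ E).map Ψ
    with hRdef
  have hRne : (R : Set (PiLp 2 (fun _ : S => E))).Nonempty := ⟨Ψ 0, ⟨0, trivial, rfl⟩⟩
  have hRclosed : IsClosed (R : Set (PiLp 2 (fun _ : S => E))) :=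
    R.closed_of_finiteDimensional
  obtain ⟨y, hyR, hydist⟩ := hRclosed.exists_infDist_eq_dist hRne 0
  have hmemR : ∀ x : E, Ψ x ∈ R := fun x => ⟨x, trivial, rfl⟩
  have hmin' : ∀ z ∈ (R : Set (PiLp 2 (fun _ : S => E))), ‖y‖ ≤ ‖z‖ := by
    intro z hz
    have h1 : Metric.infDist 0 (R : Set (PiLp 2 (fun _ : S => E))) ≤ dist 0 z :=
      Metric.infDist_le_dist_of_mem hz
    rw [hydist] at h1
    simpa using h1
  have hmin0 : ∀ x : E, ‖y‖ ≤ ‖Ψ x‖ := fun x => hmin' _ (hmemR x)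
  -- uniqueness of the point of minimal norm on R
  have huniq : ∀ z ∈ (R : Set (PiLp 2 (fun _ : S => E))), ‖z‖ = ‖y‖ → z = y := by
    intro z hz hnz
    have hm : (2⁻¹ : ℝ) • (y -ᵥ z) +ᵥ z ∈ R := R.smul_vsub_vadd_mem _ hyR hz hz
    have hm2 : (2⁻¹ : ℝ) • (y -ᵥ z) +ᵥ z = (2⁻¹ : ℝ) • (z + y) := by
      rw [vsub_eq_sub, vadd_eq_add]
      module
    rw [hm2] at hm
    have h3 : ‖y‖ ≤ ‖(2⁻¹ : ℝ) • (z + y)‖ := hmin' _ hm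
    rw [norm_smul] at h3
    simp only [norm_inv, Real.norm_ofNat] at h3
    have hpar := parallelogram_law_with_norm ℝ z y
    have h4 : ‖z - y‖ ^ 2 ≤ 0 := by
      nlinarith [norm_nonneg (z + y), norm_nonneg y, norm_nonneg (z - y)]
    have h5 : z - y = 0 := by
      have := norm_nonneg (z - y)
      have h6 : ‖z - y‖ = 0 := by nlinarith
      exact norm_eq_zero.mp h6
    exact sub_eq_zero.mp h5
  -- the flat
  set F : AffineSubspace ℝ E := AffineSubspace.comap Ψ (AffineSubspace.mk' y ⊥) with hFdef
  have hFmem : ∀ x : E, x ∈ F ↔ Ψ x = y := by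
    intro x
    rw [hFdef, AffineSubspace.mem_comap, AffineSubspace.mem_mk']
    simp [sub_eq_zero]
  obtain ⟨x₀, -, hx₀y⟩ := hyR
  have hx₀ : x₀ ∈ F := (hFmem x₀).mpr hx₀y
  have hFmin : ∀ x : E, x ∈ F ↔ ∀ z : E, ‖Ψ x‖ ≤ ‖Ψ z‖ := by
    intro x
    constructor
    · intro hx z
      rw [(hFmem x).mp hx]
      exact hmin0 z
    · intro h
      have h1 : ‖Ψ x‖ = ‖y‖ := le_antisymm (by rw [← hx₀y]; exact h x₀) (hmin0 x)
      exact (hFmem x).mpr (huniq _ (hmemR x) h1)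
  have hInv : ∀ (g : Γ) (x : E), x ∈ F → g • x ∈ F := by
    intro g x hx
    rw [hFmin] at hx ⊢
    intro z
    rw [hnorm g x]
    exact hx z
  -- elements act as translations on F
  set H : Subgroup Γ :=
    { carrier := {g : Γ | ∀ x ∈ F, ∀ x' ∈ F, g • x - g • x' = x - x'}
      one_mem' := by intro x _ x' _; simp
      mul_mem' := by
        intro g h hg hh x hx x' hx'
        rw [mul_smul, mul_smul]
        rw [hg _ (hInv h x hx) _ (hInv h x' hx')]
        exact hh x hx x' hx'
      inv_mem' := by
        intro g hg x hx x' hx'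
        have h1 := hg _ (hInv g⁻¹ x hx) _ (hInv g⁻¹ x' hx')
        rw [smul_inv_smul, smul_inv_smul] at h1
        exact h1.symm } with hHdef
  have hHall : ∀ g : Γ, ∀ x ∈ F, ∀ x' ∈ F, g • x - g • x' = x - x' := by
    have hle : Subgroup.closure (S : Set Γ) ≤ H := by
      rw [Subgroup.closure_le]
      intro s hs x hx x' hx'
      have h1 : Ψ x ⟨s, hs⟩ = Ψ x' ⟨s, hs⟩ := by
        rw [(hFmem x).mp hx, (hFmem x').mp hx']
      rw [hΨ, hΨ] at h1
      have h2 : s • x - x = s • x' - x' := h1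
      rw [sub_eq_sub_iff_sub_eq_sub] at h2
      exact h2
    rw [hS] at hle
    intro g
    exact hle trivial
  refine ⟨F, ⟨x₀, hx₀⟩, ?_, ?_⟩
  · intro g
    apply Set.eq_of_subset_of_subset
    · rintro _ ⟨x, hx, rfl⟩
      exact hInv g x hx
    · intro z hz
      exact ⟨g⁻¹ • z, hInv g⁻¹ z hz, smul_inv_smul g z⟩
  · intro g
    refine ⟨g • x₀ - x₀, ?_, ?_⟩
    · have := AffineSubspace.vsub_mem_direction (hInv g x₀ hx₀) hx₀
      rwa [vsub_eq_sub] at this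
    · intro x hx
      have h1 : g • x - g • x₀ = x - x₀ := hHall g x hx x₀ hx₀
      have h2 : g • x - x = g • x₀ - x₀ := sub_eq_sub_iff_sub_eq_sub.mp h1
      rw [sub_eq_iff_eq_add] at h2
      rw [h2]
      abel
end

section
/- Let N be a finitely generated, torsion-free nilpotent group acting by isometries on a finite-dimensional real inner product space E. Then there exists a nonempty affine subspace F ⊆ E which is invariant under N and on which every element of N acts as a translation; in particular the action of N on F factors through an abelian quotient of N (and if F is a single point, N has a global fixed point). -/
open Module Submodule RealInnerProductSpace
section
variable {N : Type*} [Group N] {E : Type*} [NormedAddCommGroup E] [InnerProductSpace ℝ E]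
  [MulAction N E]
def actEquiv (hiso : ∀ g : N, Isometry (fun x : E => g • x)) (g : N) : E ≃ᵢ E :=
  ⟨MulAction.toPerm g, hiso g⟩
noncomputable def linPart (hiso : ∀ g : N, Isometry (fun x : E => g • x)) (g : N) :
    E ≃ₗᵢ[ℝ] E :=
  (actEquiv hiso g).toRealLinearIsometryEquiv
theorem linPart_apply (hiso : ∀ g : N, Isometry (fun x : E => g • x)) (g : N) (x : E) :
    linPart hiso g x = g • x - g • (0 : E) := by
  simp [linPart, actEquiv, IsometryEquiv.toRealLinearIsometryEquiv_apply, MulAction.toPerm]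
theorem smul_eq_linPart (hiso : ∀ g : N, Isometry (fun x : E => g • x)) (g : N) (x : E) :
    g • x = linPart hiso g x + g • (0 : E) := by
  rw [linPart_apply]; abel
theorem linPart_mul (hiso : ∀ g : N, Isometry (fun x : E => g • x)) (g h : N) (x : E) :
    linPart hiso (g * h) x = linPart hiso g (linPart hiso h x) := by
  have h2 : linPart hiso h x = h • x - h • (0:E) := linPart_apply hiso h x
  rw [h2, map_sub, linPart_apply hiso (g*h), linPart_apply, linPart_apply, mul_smul, mul_smul]
  abel
theorem linPart_one (hiso : ∀ g : N, Isometry (fun x : E => g • x)) (x : E) :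
    linPart hiso 1 x = x := by
  simp [linPart_apply]
theorem linPart_inv_apply (hiso : ∀ g : N, Isometry (fun x : E => g • x)) (g : N) (x : E) :
    linPart hiso g (linPart hiso g⁻¹ x) = x := by
  rw [← linPart_mul, mul_inv_cancel, linPart_one]
end

theorem exists_center_ne_one (G : Type*) [Group G] [Group.IsNilpotent G] [Nontrivial G] :
    ∃ z : G, z ∈ Subgroup.center G ∧ z ≠ 1 := by
  obtain ⟨n, hn⟩ := nilpotent_iff_lowerCentralSeries.mp ‹_›
  induction n with
  | zero =>
    rw [lowerCentralSeries_zero] at hn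
    obtain ⟨a, b, hab⟩ := exists_pair_ne G
    have ha : a ∈ (⊥ : Subgroup G) := hn ▸ Subgroup.mem_top a
    have hb : b ∈ (⊥ : Subgroup G) := hn ▸ Subgroup.mem_top b
    rw [Subgroup.mem_bot] at ha hb
    exact absurd (ha.trans hb.symm) hab
  | succ n ih =>
    by_cases h : lowerCentralSeries (⊤ : Subgroup G) n = ⊥
    · exact ih h
    · have hle : lowerCentralSeries (⊤ : Subgroup G) n ≤ Subgroup.centralizer (⊤ : Subgroup G) :=
        Subgroup.commutator_eq_bot_iff_le_centralizer.mp hn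
      obtain ⟨⟨z, hz⟩, hz1⟩ := Subgroup.ne_bot_iff_exists_ne_one.mp h
      refine ⟨z, ?_, by simpa [Subtype.ext_iff] using hz1⟩
      have := hle hz
      rwa [Subgroup.coe_top, Subgroup.centralizer_univ] at this

universe u

theorem fixedPoint_aux {N : Type*} [Group N] [Group.IsNilpotent N] :
    ∀ (n : ℕ) (E : Type u) [NormedAddCommGroup E] [InnerProductSpace ℝ E]
      [FiniteDimensional ℝ E] [MulAction N E],
      (∀ g : N, Isometry (fun x : E => g • x)) →
      Module.finrank ℝ E ≤ n →
      (∀ v : E, (∀ g : N, g • v = v + g • (0 : E)) → v = 0) →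
      ∃ x : E, ∀ g : N, g • x = x := by
  intro n
  induction n with
  | zero =>
    intro E _ _ _ _ hiso hrank hbot
    have : Subsingleton E := Module.finrank_zero_iff.mp (Nat.le_zero.mp hrank)
    exact ⟨0, fun g => Subsingleton.elim _ _⟩
  | succ n ih =>
    intro E _ _ _ _ hiso hrank hbot
    by_cases htriv : ∀ (g : N) (x : E), g • x = x
    · exact ⟨0, fun g => htriv g 0⟩
    push_neg at htriv
    obtain ⟨g₀, x₀, hg₀⟩ := htriv
    set K := (MulAction.toPermHom N E).ker with hK
    have hmemK : ∀ k : N, k ∈ K ↔ ∀ x : E, k • x = x := by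
      intro k
      rw [hK, MonoidHom.mem_ker, Equiv.ext_iff]
      exact forall_congr' fun x => by
        simp [MulAction.toPermHom_apply, MulAction.toPerm_apply]
    haveI : Nontrivial (N ⧸ K) := by
      refine ⟨⟨QuotientGroup.mk g₀, 1, fun h => ?_⟩⟩
      exact hg₀ (((hmemK g₀).mp ((QuotientGroup.eq_one_iff g₀).mp h)) x₀)
    obtain ⟨ζ, hζc, hζ1⟩ := exists_center_ne_one (N ⧸ K)
    obtain ⟨z, rfl⟩ := QuotientGroup.mk_surjective ζ
    have hzg : ∀ g : N, ∀ x : E, (z * g) • x = (g * z) • x := by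
      intro g x
      have h1 : (QuotientGroup.mk (z * g) : N ⧸ K) = QuotientGroup.mk (g * z) := by
        rw [QuotientGroup.mk_mul, QuotientGroup.mk_mul]
        exact (Subgroup.mem_center_iff.mp hζc _).symm
      have h2 : (z * g)⁻¹ * (g * z) ∈ K := QuotientGroup.eq.mp h1
      have h3 := (hmemK _).mp h2 x
      calc (z * g) • x = (z * g) • (((z * g)⁻¹ * (g * z)) • x) := by rw [h3]
        _ = (g * z) • x := by rw [← mul_smul, ← mul_assoc, mul_inv_cancel, one_mul]
    have hzcomm : ∀ g : N, ∀ x : E, z • (g • x) = g • (z • x) := by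
      intro g x; rw [← mul_smul, ← mul_smul]; exact hzg g x
    have hznt : ∃ x : E, z • x ≠ x := by
      by_contra h
      push_neg at h
      exact hζ1 ((QuotientGroup.eq_one_iff z).mpr ((hmemK z).mpr h))
    set A := linPart hiso with hA
    have hAcomm : ∀ (g : N) (x : E), A z (A g x) = A g (A z x) := by
      intro g x
      rw [hA, ← linPart_mul, ← linPart_mul]
      simp only [linPart_apply, hzg]
    set D : Submodule ℝ E :=
      LinearMap.ker ((A z).toLinearEquiv.toLinearMap - LinearMap.id) with hD
    have hmemD : ∀ v : E, v ∈ D ↔ A z v = v := by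
      intro v
      rw [hD, LinearMap.mem_ker, LinearMap.sub_apply, LinearMap.id_apply, sub_eq_zero]
      exact Iff.rfl
    have hAD : ∀ (g : N), ∀ v, v ∈ D → A g v ∈ D := by
      intro g v hv
      rw [hmemD] at hv ⊢
      rw [hAcomm, hv]
    have hDorth : ∀ (g : N), ∀ v, v ∈ Dᗮ → A g v ∈ Dᗮ := by
      intro g v hv
      rw [Submodule.mem_orthogonal] at hv ⊢
      intro u hu
      have h1 : u = A g (A g⁻¹ u) := (linPart_inv_apply hiso g u).symm
      rw [h1, LinearIsometryEquiv.inner_map_map]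
      exact hv _ (hAD g⁻¹ u hu)
    have hrangeOrth : ∀ w : E, A z w - w ∈ Dᗮ := by
      intro w
      rw [Submodule.mem_orthogonal]
      intro u hu
      have hu' : A z u = u := (hmemD u).mp hu
      calc ⟪u, A z w - w⟫ = ⟪A z u, A z w⟫ - ⟪u, w⟫ := by rw [inner_sub_right, hu']
        _ = 0 := by rw [LinearIsometryEquiv.inner_map_map]; ring
    have hbzrel : ∀ g : N, A g (z • (0:E)) - z • (0:E) = A z (g • (0:E)) - g • (0:E) := by
      intro g
      have h := hzg g 0
      rw [mul_smul, mul_smul, smul_eq_linPart hiso z (g • (0:E)),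
        smul_eq_linPart hiso g (z • (0:E))] at h
      calc A g (z • (0:E)) - z • (0:E)
          = (A g (z • (0:E)) + g • (0:E)) - (g • (0:E) + z • (0:E)) := by abel
        _ = (A z (g • (0:E)) + z • (0:E)) - (g • (0:E) + z • (0:E)) := by rw [← h]
        _ = A z (g • (0:E)) - g • (0:E) := by abel
    set bz : E := z • (0:E) with hbz
    set b0 : E := ↑(orthogonalProjection D bz) with hb0
    have hb0D : b0 ∈ D := (orthogonalProjection D bz).2
    have hb1 : bz - b0 ∈ Dᗮ := sub_starProjection_mem_orthogonal bz
    have hb0fix : ∀ g : N, A g b0 = b0 := by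
      intro g
      have h1 : A g b0 - b0 ∈ D := sub_mem (hAD g b0 hb0D) hb0D
      have h2 : A g b0 - b0 ∈ Dᗮ := by
        have e1 : A g b0 - b0 = (A g bz - bz) - (A g (bz - b0) - (bz - b0)) := by
          rw [map_sub]; abel
        rw [e1]
        exact sub_mem ((hbzrel g) ▸ hrangeOrth (g • (0:E)))
          (sub_mem (hDorth g _ hb1) hb1)
      have h3 : ⟪A g b0 - b0, A g b0 - b0⟫ = 0 :=
        (Submodule.mem_orthogonal D _).mp h2 _ h1
      have h4 := inner_self_eq_zero.mp h3
      rwa [sub_eq_zero] at h4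
    have hb00 : b0 = 0 := by
      apply hbot
      intro g
      rw [smul_eq_linPart hiso g b0, hb0fix g]
    have hbzDo : bz ∈ Dᗮ := by simpa [hb00] using hb1
    have hDorth_range : ∀ u ∈ Dᗮ, ∃ v : E, A z v - v = u := by
      set M : E →ₗ[ℝ] E := (A z).toLinearEquiv.toLinearMap - LinearMap.id with hM
      have hMapp : ∀ w : E, M w = A z w - w := fun w => rfl
      set R := LinearMap.range M with hR
      have hRD : Rᗮ = D := by
        ext u
        rw [Submodule.mem_orthogonal, hmemD]
        constructor
        · intro h
          have h' : ∀ w, ⟪A z w, u⟫ = ⟪w, u⟫ := by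
            intro w
            have := h (M w) (LinearMap.mem_range_self M w)
            rw [hMapp, inner_sub_left, sub_eq_zero] at this
            exact this
          have h'' : ∀ w, ⟪w, (A z).symm u⟫ = ⟪w, u⟫ := by
            intro w
            calc ⟪w, (A z).symm u⟫ = ⟪A z w, A z ((A z).symm u)⟫ :=
                  (LinearIsometryEquiv.inner_map_map _ _ _).symm
              _ = ⟪A z w, u⟫ := by rw [LinearIsometryEquiv.apply_symm_apply]
              _ = ⟪w, u⟫ := h' w
          have hsymm : (A z).symm u = u := ext_inner_left ℝ h''
          have := congrArg (A z) hsymm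
          rw [LinearIsometryEquiv.apply_symm_apply] at this
          exact this.symm
        · intro hAzu v hv
          obtain ⟨w, rfl⟩ := hv
          rw [hMapp, inner_sub_left, sub_eq_zero]
          calc ⟪A z w, u⟫ = ⟪A z w, A z u⟫ := by rw [hAzu]
            _ = ⟪w, u⟫ := LinearIsometryEquiv.inner_map_map _ _ _
      have hDR : Dᗮ = R := by rw [← hRD, Submodule.orthogonal_orthogonal]
      intro u hu
      rw [hDR] at hu
      obtain ⟨v, hv⟩ := hu
      exact ⟨v, by rw [← hMapp, hv]⟩
    obtain ⟨v, hv⟩ := hDorth_range bz hbzDo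
    set p : E := -v with hp
    have hzp : z • p = p := by
      rw [smul_eq_linPart hiso z p, ← hbz, hp, map_neg, ← hv]; abel
    have hzap : A z p + bz = p := by
      have h1 := smul_eq_linPart hiso z p
      rw [hzp] at h1
      rw [hbz]
      exact h1.symm
    have hfixiff : ∀ x : E, z • x = x ↔ x - p ∈ D := by
      intro x
      rw [hmemD, map_sub]
      constructor
      · intro h
        have h1 : A z x + bz = x := by
          have h2 := smul_eq_linPart hiso z x
          rw [h] at h2
          rw [hbz]
          exact h2.symm
        calc A z x - A z p = (A z x + bz) - (A z p + bz) := by abel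
          _ = x - p := by rw [h1, hzap]
      · intro h
        rw [smul_eq_linPart hiso z x, ← hbz]
        show A z x + bz = x
        calc A z x + bz = (A z x - A z p) + (A z p + bz) := by abel
          _ = (x - p) + p := by rw [h, hzap]
          _ = x := by abel
    have hDne : D ≠ ⊤ := by
      intro hDT
      obtain ⟨x, hx⟩ := hznt
      exact hx ((hfixiff x).mpr (hDT ▸ Submodule.mem_top))
    have hrankD : finrank ℝ D ≤ n := by
      have h1 : finrank ℝ D < finrank ℝ E :=
        Submodule.finrank_lt hDne
      omega
    have hmemact : ∀ (g : N) (d : ↥D), g • (p + (d : E)) - p ∈ D := by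
      intro g d
      apply (hfixiff _).mp
      rw [hzcomm]
      congr 1
      apply (hfixiff _).mpr
      simpa using d.2
    letI actD : MulAction N ↥D :=
      { smul := fun g d => ⟨g • (p + (d : E)) - p, hmemact g d⟩
        one_smul := fun d => by
          apply Subtype.ext
          show (1 : N) • (p + (d : E)) - p = (d : E)
          rw [one_smul]; abel
        mul_smul := fun g h d => by
          apply Subtype.ext
          show (g * h) • (p + (d : E)) - p = g • (p + (h • (p + (d : E)) - p)) - p
          have e1 : p + (h • (p + (d : E)) - p) = h • (p + (d : E)) := by abel
          rw [e1, mul_smul] }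
    have hsmulD : ∀ (g : N) (d : ↥D), ((g • d : ↥D) : E) = g • (p + (d : E)) - p :=
      fun g d => rfl
    have hiso' : ∀ g : N, Isometry (fun d : ↥D => g • d) := by
      intro g
      apply Isometry.of_dist_eq
      intro d d'
      rw [Subtype.dist_eq, hsmulD, hsmulD, dist_sub_right]
      calc dist (g • (p + (d : E))) (g • (p + (d' : E))) = dist (p + (d : E)) (p + (d' : E)) :=
            (hiso g).dist_eq _ _
        _ = dist (d : E) (d' : E) := dist_add_left _ _ _
        _ = dist d d' := (Subtype.dist_eq d d').symm
    have hbot' : ∀ v : ↥D, (∀ g : N, g • v = v + g • (0 : ↥D)) → v = 0 := by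
      intro v hv
      have hAv : ∀ g : N, A g (v : E) = (v : E) := by
        intro g
        have h1 := congrArg Subtype.val (hv g)
        rw [hsmulD, Submodule.coe_add, hsmulD, Submodule.coe_zero, add_zero] at h1
        -- h1 : g • (p + ↑v) - p = ↑v + (g • p - p)
        have h2 : g • (p + (v : E)) = (v : E) + g • p := by
          have := h1
          calc g • (p + (v : E)) = (g • (p + (v : E)) - p) + p := by abel
            _ = ((v : E) + (g • p - p)) + p := by rw [h1]
            _ = (v : E) + g • p := by abel
        rw [smul_eq_linPart hiso g (p + (v : E)), smul_eq_linPart hiso g p, map_add] at h2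
        have h3 : A g p + A g (v : E) + g • (0:E) = (v : E) + (A g p + g • (0:E)) := h2
        calc A g (v : E)
            = (A g p + A g (v : E) + g • (0:E)) - (A g p + g • (0:E)) := by abel
          _ = ((v : E) + (A g p + g • (0:E))) - (A g p + g • (0:E)) := by rw [h3]
          _ = (v : E) := by abel
      have hv0 : (v : E) = 0 := by
        apply hbot
        intro g
        rw [smul_eq_linPart hiso g (v : E), hAv g]
      exact Subtype.ext hv0
    obtain ⟨d, hd⟩ := ih ↥D hiso' hrankD hbot'
    refine ⟨p + (d : E), fun g => ?_⟩
    have h1 := congrArg Subtype.val (hd g)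
    rw [hsmulD] at h1
    calc g • (p + (d : E)) = (g • (p + (d : E)) - p) + p := by abel
      _ = (d : E) + p := by rw [h1]
      _ = p + (d : E) := by abel

/-- A finitely generated torsion-free nilpotent group acting by isometries on a
finite-dimensional real inner product space leaves invariant a nonempty affine
subspace on which every element acts as a translation (so the action on it factors
through an abelian quotient; if the subspace is a point, there is a global fixed
point). -/
theorem nilpotent_action_has_invariant_flat
    (N : Type*) [Group N] [Group.FG N] [Group.IsNilpotent N]
    (htf : Monoid.IsTorsionFree N)
    (E : Type*) [NormedAddCommGroup E] [InnerProductSpace ℝ E] [FiniteDimensional ℝ E]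
    [MulAction N E] (hiso : ∀ g : N, Isometry (fun x : E => g • x)) :
    ∃ F : AffineSubspace ℝ E, (F : Set E).Nonempty ∧
      (∀ g : N, (fun x : E => g • x) '' (F : Set E) = F) ∧
      (∀ g : N, ∃ c ∈ F.direction, ∀ x ∈ F, g • x = x + c) := by
  classical
  set A := linPart hiso with hA
  set U : Submodule ℝ E :=
    { carrier := {v : E | ∀ g : N, A g v = v}
      add_mem' := fun ha hb g => by rw [map_add, ha g, hb g]
      zero_mem' := fun g => map_zero _
      smul_mem' := fun c v hv g => by rw [map_smul, hv g] } with hUdef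
  have hmemU : ∀ v : E, v ∈ U ↔ ∀ g : N, A g v = v := fun v => Iff.rfl
  set W : Submodule ℝ E := Uᗮ with hW
  have hAW : ∀ (g : N), ∀ v ∈ W, A g v ∈ W := by
    intro g v hv
    rw [hW, Submodule.mem_orthogonal] at hv ⊢
    intro u hu
    calc ⟪u, A g v⟫ = ⟪A g u, A g v⟫ := by rw [(hmemU u).mp hu g]
      _ = ⟪u, v⟫ := LinearIsometryEquiv.inner_map_map _ _ _
      _ = 0 := hv u hu
  have hsmul_addU : ∀ (g : N) (x u : E), u ∈ U → g • (x + u) = g • x + u := by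
    intro g x u hu
    rw [smul_eq_linPart hiso g (x + u), map_add, (hmemU u).mp hu g,
      smul_eq_linPart hiso g x]
    abel
  set P := orthogonalProjection U with hP
  have hPW : ∀ v ∈ W, (P v : E) = 0 := by
    intro v hv
    rw [hP, Submodule.orthogonalProjectionOnto_apply_of_mem_orthogonal hv,
      Submodule.coe_zero]
  have hQQ : ∀ (g : N) (v : E), g • (v - (P v : E)) = g • v - (P v : E) := by
    intro g v
    have h1 : g • ((v - (P v : E)) + (P v : E)) = g • (v - (P v : E)) + (P v : E) :=
      hsmul_addU g _ _ (P v).2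
    have h2 : (v - (P v : E)) + (P v : E) = v := by abel
    rw [h2] at h1
    calc g • (v - (P v : E)) = (g • (v - (P v : E)) + (P v : E)) - (P v : E) := by abel
      _ = g • v - (P v : E) := by rw [← h1]
  letI actW : MulAction N ↥W :=
    { smul := fun g w => ⟨g • (w : E) - (P (g • (w : E)) : E),
        sub_starProjection_mem_orthogonal _⟩
      one_smul := fun w => by
        apply Subtype.ext
        show (1 : N) • (w : E) - (P ((1 : N) • (w : E)) : E) = (w : E)
        rw [one_smul, hPW _ w.2, sub_zero]
      mul_smul := fun g h w => by
        apply Subtype.ext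
        show (g * h) • (w : E) - (P ((g * h) • (w : E)) : E)
            = g • (h • (w : E) - (P (h • (w : E)) : E))
              - (P (g • (h • (w : E) - (P (h • (w : E)) : E))) : E)
        rw [hQQ g (h • (w : E)), mul_smul]
        have h3 : P (g • (h • (w : E)) - (P (h • (w : E)) : E))
            = P (g • (h • (w : E))) - P ((P (h • (w : E)) : E)) := map_sub _ _ _
        have h4 : P ((P (h • (w : E)) : E)) = P (h • (w : E)) :=
          orthogonalProjection_mem_subspace_eq_self _
        rw [h3, h4, Submodule.coe_sub]
        abel }
  have hsmulW : ∀ (g : N) (w : ↥W),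
      ((g • w : ↥W) : E) = g • (w : E) - (P (g • (w : E)) : E) := fun g w => rfl
  have hPsmul : ∀ (g : N), ∀ v ∈ W, (P (g • v) : E) = (P (g • (0 : E)) : E) := by
    intro g v hv
    have h1 : g • v = A g v + g • (0 : E) := smul_eq_linPart hiso g v
    rw [h1, map_add, Submodule.coe_add, hPW _ (hAW g v hv), zero_add]
  have hiso' : ∀ g : N, Isometry (fun w : ↥W => g • w) := by
    intro g
    apply Isometry.of_dist_eq
    intro w w'
    rw [Subtype.dist_eq, hsmulW, hsmulW, hPsmul g _ w.2, hPsmul g _ w'.2, dist_sub_right]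
    rw [(hiso g).dist_eq, ← Subtype.dist_eq]
  have hbot' : ∀ v : ↥W, (∀ g : N, g • v = v + g • (0 : ↥W)) → v = 0 := by
    intro v hv
    have hAv : ∀ g : N, A g (v : E) = (v : E) := by
      intro g
      have h1 := congrArg Subtype.val (hv g)
      rw [hsmulW, Submodule.coe_add, hsmulW, Submodule.coe_zero, hPsmul g _ v.2] at h1
      -- h1 : g • ↑v - ↑(P (g • 0)) = ↑v + (g • 0 - ↑(P (g • 0)))
      have h2 : g • (v : E) = (v : E) + g • (0 : E) := by
        calc g • (v : E) = (g • (v : E) - (P (g • (0:E)) : E)) + (P (g • (0:E)) : E) := by abel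
          _ = ((v : E) + (g • (0:E) - (P (g • (0:E)) : E))) + (P (g • (0:E)) : E) := by rw [h1]
          _ = (v : E) + g • (0 : E) := by abel
      rw [smul_eq_linPart hiso g (v : E)] at h2
      calc A g (v : E) = (A g (v : E) + g • (0:E)) - g • (0:E) := by abel
        _ = ((v : E) + g • (0:E)) - g • (0:E) := by rw [h2]
        _ = (v : E) := by abel
    have hvU : (v : E) ∈ U := (hmemU _).mpr hAv
    have hvW : (v : E) ∈ Uᗮ := v.2
    have h3 : ⟪(v : E), (v : E)⟫ = 0 :=
      (Submodule.mem_orthogonal U (v : E)).mp hvW _ hvU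
    exact Subtype.ext (inner_self_eq_zero.mp h3)
  obtain ⟨w, hw⟩ := fixedPoint_aux (Module.finrank ℝ ↥W) ↥W hiso' le_rfl hbot'
  set c : N → E := fun g => (P (g • (0 : E)) : E) with hc
  have hcU : ∀ g : N, c g ∈ U := fun g => (P _).2
  have hgw : ∀ g : N, g • (w : E) = (w : E) + c g := by
    intro g
    have h1 := congrArg Subtype.val (hw g)
    rw [hsmulW, hPsmul g _ w.2] at h1
    calc g • (w : E) = (g • (w : E) - (P (g • (0:E)) : E)) + (P (g • (0:E)) : E) := by abel
      _ = (w : E) + c g := by rw [h1, hc]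
  have htrans : ∀ (g : N), ∀ x : E, x - (w : E) ∈ U → g • x = x + c g := by
    intro g x hx
    have h1 : x = (w : E) + (x - (w : E)) := by abel
    rw [h1, hsmul_addU g _ _ hx, hgw g]
    abel
  refine ⟨AffineSubspace.mk' (w : E) U, ⟨(w : E), AffineSubspace.self_mem_mk' _ _⟩, ?_, ?_⟩
  · intro g
    ext y
    simp only [Set.mem_image, SetLike.mem_coe]
    constructor
    · rintro ⟨x, hx, rfl⟩
      rw [AffineSubspace.mem_mk', vsub_eq_sub] at hx
      rw [htrans g x hx, AffineSubspace.mem_mk', vsub_eq_sub]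
      have : x + c g - (w : E) = (x - (w : E)) + c g := by abel
      rw [this]
      exact add_mem hx (hcU g)
    · intro hy
      rw [AffineSubspace.mem_mk', vsub_eq_sub] at hy
      refine ⟨y - c g, ?_, ?_⟩
      · rw [AffineSubspace.mem_mk', vsub_eq_sub]
        have : y - c g - (w : E) = (y - (w : E)) - c g := by abel
        rw [this]
        exact sub_mem hy (hcU g)
      · rw [htrans g _ (by
          have : y - c g - (w : E) = (y - (w : E)) - c g := by abel
          rw [this]; exact sub_mem hy (hcU g))]
        abel
  · intro g
    refine ⟨c g, ?_, ?_⟩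
    · rw [AffineSubspace.direction_mk']
      exact hcU g
    · intro x hx
      rw [AffineSubspace.mem_mk', vsub_eq_sub] at hx
      exact htrans g x hx
end
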